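/- arXiv:2506.12438 — 4 statements merged into one kernel-verified Lean document; each statement's English description precedes it below -/
import Mathlib

section
/- The generating series of the sum of squares of parts over all partitions satisfies: ∑_{n≥1} Q^n (∑_{μ ⊢ n} ∑_i μ_i²) = P(Q)·E₃(Q), where P(Q) = ∏_{k≥1} 1/(1−Q^k) and E₃(Q) = ∑_{k≥1} k² Q^k/(1−Q^k), as formal power series over ℚ. -/
open PowerSeries Finset

noncomputable section

/-- `P(Q) = ∏_{k≥1} (1 - Q^k)⁻¹`, characterized coefficientwise by truncated products. -/
def IsPartitionProd (P : PowerSeries ℚ) : Prop :=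
  ∀ N : ℕ, PowerSeries.coeff N P =
    PowerSeries.coeff N (∏ k ∈ Finset.Icc 1 N, (1 - (PowerSeries.X : PowerSeries ℚ) ^ k)⁻¹)

/-- `E₃(Q) = ∑_{k≥1} k² Q^k/(1-Q^k)`, characterized coefficientwise by truncated sums. -/
def IsE3 (E : PowerSeries ℚ) : Prop :=
  ∀ N : ℕ, PowerSeries.coeff N E =
    PowerSeries.coeff N (∑ k ∈ Finset.Icc 1 N,
      (PowerSeries.C ((k : ℚ) ^ 2)) * (PowerSeries.X : PowerSeries ℚ) ^ k
        * (1 - PowerSeries.X ^ k)⁻¹)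

namespace PartsSqAux

open scoped Classical

variable {α : Type*}

/-- A convenience constructor for the power series whose coefficients indicate a subset. -/
def indicatorSeries (α : Type*) [Semiring α] (s : Set ℕ) : PowerSeries α :=
  PowerSeries.mk fun n => if n ∈ s then 1 else 0

theorem coeff_indicator (s : Set ℕ) [Semiring α] (n : ℕ) :
    coeff n (indicatorSeries α s) = if n ∈ s then 1 else 0 :=
  coeff_mk _ _

theorem constantCoeff_indicator (s : Set ℕ) [Semiring α] :
    constantCoeff (indicatorSeries α s) = if 0 ∈ s then 1 else 0 :=
  rfl

theorem num_series' [Field α] (i : ℕ) :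
    (1 - (X : PowerSeries α) ^ (i + 1))⁻¹ = indicatorSeries α {k | i + 1 ∣ k} := by
  rw [PowerSeries.inv_eq_iff_mul_eq_one]
  · ext n
    cases n with
    | zero => simp [mul_sub, zero_pow, constantCoeff_indicator]
    | succ n =>
      simp only [coeff_one, if_false, mul_sub, mul_one, coeff_indicator,
        LinearMap.map_sub, reduceCtorEq]
      simp_rw [coeff_mul, coeff_X_pow, coeff_indicator, @boole_mul _ _ _ _]
      erw [@sum_ite _ _ _ _ _ (fun _ => Classical.propDecidable _), sum_ite]
      simp_rw [@filter_filter _ _ _ _ _, sum_const_zero, add_zero, sum_const, nsmul_eq_mul, mul_one,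
        sub_eq_iff_eq_add, zero_add]
      symm
      split_ifs with h
      · suffices #{a ∈ antidiagonal (n + 1) | i + 1 ∣ a.fst ∧ a.snd = i + 1} = 1 by
          simp only [Set.mem_setOf_eq]; convert congr_arg ((↑) : ℕ → α) this; norm_cast
        rw [card_eq_one]
        cases' h with p hp
        refine ⟨((i + 1) * (p - 1), i + 1), ?_⟩
        ext ⟨a₁, a₂⟩
        simp only [mem_filter, Prod.mk.injEq, HasAntidiagonal.mem_antidiagonal, mem_singleton]
        constructor
        · rintro ⟨a_left, ⟨a, rfl⟩, rfl⟩
          refine ⟨?_, rfl⟩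
          rw [Nat.mul_sub_left_distrib, ← hp, ← a_left, mul_one, Nat.add_sub_cancel]
        · rintro ⟨rfl, rfl⟩
          match p with
          | 0 => rw [mul_zero] at hp; cases hp
          | p + 1 => rw [hp]; simp [mul_add]
      · suffices #{a ∈ antidiagonal (n + 1) | i + 1 ∣ a.fst ∧ a.snd = i + 1} = 0 by
          simp only [Set.mem_setOf_eq]; convert congr_arg ((↑) : ℕ → α) this; norm_cast
        rw [card_eq_zero]
        apply eq_empty_of_forall_notMem
        simp only [Prod.forall, mem_filter, not_and, HasAntidiagonal.mem_antidiagonal]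
        rintro _ h₁ h₂ ⟨a, rfl⟩ rfl
        apply h
        simp [← h₂]
  · simp [zero_pow]

theorem partialGF_prop (α : Type*) [CommSemiring α] (n : ℕ) (s : Finset ℕ) (hs : ∀ i ∈ s, 0 < i)
    (c : ℕ → Set ℕ) (hc : ∀ i, i ∉ s → 0 ∈ c i) :
    #{p : n.Partition | (∀ j, p.parts.count j ∈ c j) ∧ ∀ j ∈ p.parts, j ∈ s} =
      coeff n (∏ i ∈ s, indicatorSeries α ((· * i) '' c i)) := by
  simp_rw [coeff_prod, coeff_indicator, prod_boole, sum_boole]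
  apply congr_arg
  simp only [mem_univ, forall_true_left, not_and, not_forall, exists_prop,
    Set.mem_image, not_exists]
  set φ : (a : Nat.Partition n) →
    a ∈ filter (fun p ↦ (∀ (j : ℕ), Multiset.count j p.parts ∈ c j) ∧ ∀ j ∈ p.parts, j ∈ s) univ →
    ℕ →₀ ℕ := fun p _ => {
      toFun := fun i => Multiset.count i p.parts • i
      support := Finset.filter (fun i => i ≠ 0) p.parts.toFinset
      mem_support_toFun := fun a => by
        simp only [smul_eq_mul, ne_eq, mul_eq_zero, Multiset.count_eq_zero]
        rw [not_or, not_not]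
        simp only [Multiset.mem_toFinset, not_not, mem_filter] }
  refine Finset.card_bij φ ?_ ?_ ?_
  · intro a ha
    simp only [φ, not_forall, not_exists, not_and, exists_prop, mem_filter]
    rw [mem_finsuppAntidiag]
    dsimp only [ne_eq, smul_eq_mul, id_eq, eq_mpr_eq_cast, le_eq_subset, Finsupp.coe_mk]
    simp only [mem_univ, forall_true_left, not_and, not_forall, exists_prop,
      mem_filter, true_and] at ha
    refine ⟨⟨?_, fun i ↦ ?_⟩, fun i _ ↦ ⟨a.parts.count i, ha.1 i, rfl⟩⟩
    · conv_rhs => simp [← a.parts_sum]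
      rw [sum_multiset_count_of_subset _ s]
      · simp only [smul_eq_mul]
      · intro i
        simp only [Multiset.mem_toFinset, not_not, mem_filter]
        apply ha.2
    · simp only [ne_eq, Multiset.mem_toFinset, not_not, mem_filter, and_imp]
      exact fun hi _ ↦ ha.2 i hi
  · intro p₁ hp₁ p₂ hp₂ h
    apply Nat.Partition.ext
    simp only [true_and, mem_univ, mem_filter] at hp₁ hp₂
    ext i
    simp only [φ, ne_eq, Multiset.mem_toFinset, not_not, smul_eq_mul, Finsupp.mk.injEq] at h
    by_cases hi : i = 0
    · rw [hi]
      rw [Multiset.count_eq_zero_of_notMem]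
      · rw [Multiset.count_eq_zero_of_notMem]
        intro a; exact Nat.lt_irrefl 0 (hs 0 (hp₂.2 0 a))
      intro a; exact Nat.lt_irrefl 0 (hs 0 (hp₁.2 0 a))
    · rw [← mul_left_inj' hi]
      rw [funext_iff] at h
      exact h.2 i
  · simp only [φ, mem_filter, mem_finsuppAntidiag, mem_univ, exists_prop, true_and, and_assoc]
    rintro f ⟨hf, hf₃, hf₄⟩
    have hf' : f ∈ finsuppAntidiag s n := mem_finsuppAntidiag.mpr ⟨hf, hf₃⟩
    simp only [mem_finsuppAntidiag] at hf'
    refine ⟨⟨∑ i ∈ s, Multiset.replicate (f i / i) i, ?_, ?_⟩, ?_, ?_, ?_⟩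
    · intro i hi
      simp only [exists_prop, Multiset.mem_sum, mem_map, Function.Embedding.coeFn_mk] at hi
      rcases hi with ⟨t, ht, z⟩
      apply hs
      rwa [Multiset.eq_of_mem_replicate z]
    · simp_rw [Multiset.sum_sum, Multiset.sum_replicate, Nat.nsmul_eq_mul]
      rw [← hf'.1]
      refine sum_congr rfl fun i hi => Nat.div_mul_cancel ?_
      rcases hf₄ i hi with ⟨w, _, hw₂⟩
      rw [← hw₂]
      exact dvd_mul_left _ _
    · intro i
      simp_rw [Multiset.count_sum', Multiset.count_replicate, sum_ite_eq']
      split_ifs with h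
      · rcases hf₄ i h with ⟨w, hw₁, hw₂⟩
        rwa [← hw₂, Nat.mul_div_cancel _ (hs i h)]
      · exact hc _ h
    · intro i hi
      rw [Multiset.mem_sum] at hi
      rcases hi with ⟨j, hj₁, hj₂⟩
      rwa [Multiset.eq_of_mem_replicate hj₂]
    · ext i
      simp_rw [Multiset.count_sum', Multiset.count_replicate, sum_ite_eq']
      simp only [ne_eq, Multiset.mem_toFinset, not_not, smul_eq_mul, ite_mul,
        zero_mul, Finsupp.coe_mk]
      split_ifs with h
      · apply Nat.div_mul_cancel
        rcases hf₄ i h with ⟨w, _, hw₂⟩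
        apply Dvd.intro_left _ hw₂
      · apply symm
        rw [← Finsupp.notMem_support_iff]
        exact notMem_mono hf'.2 h

/-- number of partitions, as a rational. -/
def pp (a : ℕ) : ℚ := (Fintype.card (Nat.Partition a) : ℚ)

/-- sum of squares of divisors, as a rational. -/
def sigma2 (b : ℕ) : ℚ := ∑ k ∈ Finset.Icc 1 b, if k ∣ b then (k : ℚ) ^ 2 else 0

theorem parts_mem_Icc {n : ℕ} (μ : n.Partition) {j : ℕ} (hj : j ∈ μ.parts) :
    j ∈ Finset.Icc 1 n := by
  rw [mem_Icc]
  refine ⟨μ.parts_pos hj, ?_⟩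
  simpa [μ.parts_sum] using Multiset.single_le_sum (fun _ _ => Nat.zero_le _) _ hj

theorem coeff_partition_prod (N : ℕ) :
    PowerSeries.coeff N (∏ k ∈ Finset.Icc 1 N, (1 - (PowerSeries.X : PowerSeries ℚ) ^ k)⁻¹) =
      pp N := by
  have h1 : ∀ k ∈ Finset.Icc 1 N, (1 - (PowerSeries.X : PowerSeries ℚ) ^ k)⁻¹ =
      indicatorSeries ℚ ((· * k) '' Set.univ) := by
    intro k hk
    match k, (Finset.mem_Icc.mp hk).1 with
    | (j+1), _ =>
      have hset : ((· * (j + 1)) '' Set.univ : Set ℕ) = {k | j + 1 ∣ k} := by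
        ext x
        constructor
        · rintro ⟨a, -, rfl⟩; exact Dvd.intro_left a rfl
        · rintro ⟨a, rfl⟩; exact ⟨a, trivial, mul_comm a (j + 1)⟩
      rw [num_series' j, hset]
  rw [Finset.prod_congr rfl h1,
    ← partialGF_prop ℚ N (Finset.Icc 1 N) (fun i hi => (Finset.mem_Icc.mp hi).1)
      (fun _ => Set.univ) (fun _ _ => trivial)]
  rw [pp]
  norm_cast
  rw [← Finset.card_univ]
  congr 1
  apply Finset.filter_true_of_mem
  intro μ _
  exact ⟨fun _ => trivial, fun j hj => parts_mem_Icc μ hj⟩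

theorem coeff_E3_trunc (b : ℕ) :
    PowerSeries.coeff b (∑ k ∈ Finset.Icc 1 b,
      (PowerSeries.C ((k : ℚ) ^ 2)) * (PowerSeries.X : PowerSeries ℚ) ^ k
        * (1 - PowerSeries.X ^ k)⁻¹) = sigma2 b := by
  rw [map_sum, sigma2]
  apply Finset.sum_congr rfl
  intro k hk
  obtain ⟨hk1, hkb⟩ := Finset.mem_Icc.mp hk
  match k, hk1 with
  | (j + 1), _ =>
    rw [num_series' j, mul_assoc, PowerSeries.coeff_C_mul]
    have hb : b = (b - (j + 1)) + (j + 1) := (Nat.sub_add_cancel hkb).symm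
    rw [show ((PowerSeries.coeff b)
        ((PowerSeries.X : PowerSeries ℚ) ^ (j + 1) * indicatorSeries ℚ {k | j + 1 ∣ k})) =
        (PowerSeries.coeff ((b - (j + 1)) + (j + 1)))
        ((PowerSeries.X : PowerSeries ℚ) ^ (j + 1) * indicatorSeries ℚ {k | j + 1 ∣ k}) from by
      rw [← hb]]
    rw [PowerSeries.coeff_X_pow_mul, coeff_indicator]
    have hdvd : (j + 1 ∣ b - (j + 1)) ↔ (j + 1 ∣ b) := by
      constructor
      · intro h
        have := h.add (dvd_refl (j + 1))
        rwa [Nat.sub_add_cancel hkb] at this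
      · intro h
        exact Nat.dvd_sub h dvd_rfl
    simp only [Set.mem_setOf_eq, hdvd]
    split_ifs <;> ring

theorem count_mul_le {n k : ℕ} (μ : n.Partition) : μ.parts.count k * k ≤ n := by
  have h : Multiset.replicate (μ.parts.count k) k ≤ μ.parts :=
    Multiset.le_count_iff_replicate_le.mp le_rfl
  obtain ⟨u, hu⟩ := Multiset.le_iff_exists_add.mp h
  have h3 := congrArg Multiset.sum hu
  rw [Multiset.sum_add, Multiset.sum_replicate, smul_eq_mul, μ.parts_sum] at h3
  omega

theorem card_subtract (n k m : ℕ) (hk : 1 ≤ k) (hmk : m * k ≤ n) :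
    #(Finset.univ.filter (fun μ : n.Partition => m ≤ μ.parts.count k)) =
      Fintype.card ((n - m * k).Partition) := by
  rw [← Finset.card_univ]
  have hrep : ∀ (μ : n.Partition), m ≤ μ.parts.count k →
      Multiset.replicate m k ≤ μ.parts := fun μ h =>
    Multiset.le_count_iff_replicate_le.mp h
  refine Finset.card_bij'
    (fun μ hμ => ⟨μ.parts - Multiset.replicate m k, ?_, ?_⟩)
    (fun ν _ => ⟨ν.parts + Multiset.replicate m k, ?_, ?_⟩) ?_ ?_ ?_ ?_
  · intro j hj
    exact μ.parts_pos (Multiset.mem_of_le (tsub_le_self) hj)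
  · have hle := hrep μ (Finset.mem_filter.mp hμ).2
    have h3 := congrArg Multiset.sum (tsub_add_cancel_of_le hle)
    rw [Multiset.sum_add, Multiset.sum_replicate, smul_eq_mul, μ.parts_sum] at h3
    omega
  · intro j hj
    rcases Multiset.mem_add.mp hj with h | h
    · exact ν.parts_pos h
    · rw [Multiset.eq_of_mem_replicate h]; omega
  · rw [Multiset.sum_add, Multiset.sum_replicate, smul_eq_mul, ν.parts_sum]
    omega
  · intro μ hμ
    exact Finset.mem_univ _
  · intro ν _
    refine Finset.mem_filter.mpr ⟨Finset.mem_univ _, ?_⟩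
    simp only [Multiset.count_add, Multiset.count_replicate_self]
    omega
  · intro μ hμ
    apply Nat.Partition.ext
    exact tsub_add_cancel_of_le (hrep μ (Finset.mem_filter.mp hμ).2)
  · intro ν _
    apply Nat.Partition.ext
    exact add_tsub_cancel_right _ _

theorem antidiag_sum (n k : ℕ) (hk : 1 ≤ k) (f : ℕ → ℚ) :
    ∑ ab ∈ Finset.HasAntidiagonal.antidiagonal n, (if 0 < ab.2 ∧ k ∣ ab.2 then f ab.1 else 0) =
      ∑ m ∈ Finset.Icc 1 (n / k), f (n - m * k) := by
  rw [Finset.sum_ite, Finset.sum_const_zero, add_zero]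
  refine Finset.sum_bij' (fun ab _ => ab.2 / k) (fun m _ => (n - m * k, m * k))
    ?_ ?_ ?_ ?_ ?_
  · rintro ⟨a, b⟩ hab
    obtain ⟨hab1, hb0, hkb⟩ : a + b = n ∧ 0 < b ∧ k ∣ b := by
      have h1 := Finset.mem_filter.mp hab
      exact ⟨Finset.HasAntidiagonal.mem_antidiagonal.mp (h1.1), h1.2⟩
    rw [Finset.mem_Icc]
    constructor
    · exact Nat.one_le_div_iff (by omega) |>.mpr (Nat.le_of_dvd hb0 hkb)
    · exact Nat.div_le_div_right (by omega)
  · intro m hm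
    obtain ⟨hm1, hm2⟩ := Finset.mem_Icc.mp hm
    have hmk : m * k ≤ n := (Nat.le_div_iff_mul_le (by omega)).mp hm2
    refine Finset.mem_filter.mpr ⟨Finset.HasAntidiagonal.mem_antidiagonal.mpr (by omega), ?_, ?_⟩
    · have : 0 < m * k := Nat.mul_pos (by omega) (by omega)
      omega
    · exact dvd_mul_left k m
  · rintro ⟨a, b⟩ hab
    obtain ⟨hab1, hb0, hkb⟩ : a + b = n ∧ 0 < b ∧ k ∣ b := by
      have h1 := Finset.mem_filter.mp hab
      exact ⟨Finset.HasAntidiagonal.mem_antidiagonal.mp (h1.1), h1.2⟩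
    have h2 : b / k * k = b := Nat.div_mul_cancel hkb
    dsimp only
    rw [h2]
    simp only [Prod.mk.injEq]
    exact ⟨by omega, trivial⟩
  · intro m hm
    dsimp only
    exact Nat.mul_div_cancel m (by omega : 0 < k)
  · rintro ⟨a, b⟩ hab
    obtain ⟨hab1, hb0, hkb⟩ : a + b = n ∧ 0 < b ∧ k ∣ b := by
      have h1 := Finset.mem_filter.mp hab
      exact ⟨Finset.HasAntidiagonal.mem_antidiagonal.mp (h1.1), h1.2⟩
    have h2 : b / k * k = b := Nat.div_mul_cancel hkb
    dsimp only
    rw [h2]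
    congr 1
    omega

theorem map_sq_cast (n : ℕ) (μ : Nat.Partition n) :
    ((μ.parts.map fun a => (a : ℚ) ^ 2)).sum =
      (Multiset.map (fun a : ℕ => (a : ℚ) ^ 2) μ.parts).sum := by
  simp only [Multiset.bind_def, Multiset.pure_def, Multiset.bind_singleton, Multiset.map_map]
  rfl

theorem key (n : ℕ) :
    (∑ μ : Nat.Partition n, ((μ.parts.map fun a => (a : ℚ) ^ 2).sum)) =
      ∑ ab ∈ Finset.HasAntidiagonal.antidiagonal n, pp ab.1 * sigma2 ab.2 := by
  have hsigma : ∀ ab ∈ Finset.HasAntidiagonal.antidiagonal n, sigma2 ab.2 =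
      ∑ k ∈ Finset.Icc 1 n, if 0 < ab.2 ∧ k ∣ ab.2 then (k : ℚ) ^ 2 else 0 := by
    rintro ⟨a, b⟩ hab
    have hbn : b ≤ n := by
      have := Finset.HasAntidiagonal.mem_antidiagonal.mp hab
      omega
    rw [sigma2]
    have hcong : ∀ k ∈ Finset.Icc 1 b, (if k ∣ b then (k : ℚ) ^ 2 else 0) =
        (if 0 < b ∧ k ∣ b then (k : ℚ) ^ 2 else 0) := by
      intro k hk
      obtain ⟨h1, h2⟩ := Finset.mem_Icc.mp hk
      have hb0 : 0 < b := by omega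
      exact (if_congr (by simp [hb0]) rfl rfl).symm
    rw [Finset.sum_congr rfl hcong]
    apply Finset.sum_subset (Finset.Icc_subset_Icc_right hbn)
    intro k hk hnk
    rw [if_neg]
    rintro ⟨hb0, hdv⟩
    exact hnk (Finset.mem_Icc.mpr ⟨(Finset.mem_Icc.mp hk).1, Nat.le_of_dvd hb0 hdv⟩)
  calc (∑ μ : Nat.Partition n, ((μ.parts.map fun a => (a : ℚ) ^ 2).sum))
      = ∑ μ : Nat.Partition n, ∑ k ∈ Finset.Icc 1 n,
          (μ.parts.count k : ℚ) * (k : ℚ) ^ 2 := by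
        apply Finset.sum_congr rfl
        intro μ _
        rw [map_sq_cast n μ]
        rw [Finset.sum_multiset_map_count μ.parts (fun a => (a : ℚ) ^ 2)]
        rw [Finset.sum_subset (fun i hi => parts_mem_Icc μ (Multiset.mem_toFinset.mp hi))]
        · exact Finset.sum_congr rfl fun k _ => nsmul_eq_mul _ _
        · intro k _ hnk
          rw [Multiset.count_eq_zero_of_notMem (fun h => hnk (Multiset.mem_toFinset.mpr h))]
          simp
    _ = ∑ k ∈ Finset.Icc 1 n, ∑ μ : Nat.Partition n,
          (μ.parts.count k : ℚ) * (k : ℚ) ^ 2 := Finset.sum_comm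
    _ = ∑ k ∈ Finset.Icc 1 n,
          (∑ m ∈ Finset.Icc 1 (n / k), pp (n - m * k)) * (k : ℚ) ^ 2 := by
        apply Finset.sum_congr rfl
        intro k hk
        obtain ⟨hk1, hkn⟩ := Finset.mem_Icc.mp hk
        rw [← Finset.sum_mul]
        congr 1
        calc ∑ μ : Nat.Partition n, (μ.parts.count k : ℚ)
            = ∑ μ : Nat.Partition n, ∑ m ∈ Finset.Icc 1 (n / k),
                (if m ≤ μ.parts.count k then (1 : ℚ) else 0) := by
              apply Finset.sum_congr rfl
              intro μ _
              have hcle : μ.parts.count k ≤ n / k :=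
                (Nat.le_div_iff_mul_le (by omega)).mpr (count_mul_le μ)
              rw [Finset.sum_boole]
              have hfil : Finset.filter (fun m => m ≤ μ.parts.count k)
                  (Finset.Icc 1 (n / k)) = Finset.Icc 1 (μ.parts.count k) := by
                ext m
                simp only [Finset.mem_filter, Finset.mem_Icc]
                omega
              rw [hfil, Nat.card_Icc]
              simp
          _ = ∑ m ∈ Finset.Icc 1 (n / k), ∑ μ : Nat.Partition n,
                (if m ≤ μ.parts.count k then (1 : ℚ) else 0) := Finset.sum_comm
          _ = ∑ m ∈ Finset.Icc 1 (n / k), pp (n - m * k) := by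
              apply Finset.sum_congr rfl
              intro m hm
              obtain ⟨hm1, hm2⟩ := Finset.mem_Icc.mp hm
              have hmk : m * k ≤ n := (Nat.le_div_iff_mul_le (by omega)).mp hm2
              rw [Finset.sum_boole, card_subtract n k m (by omega) hmk, pp]
    _ = ∑ ab ∈ Finset.HasAntidiagonal.antidiagonal n, pp ab.1 * sigma2 ab.2 := by
        symm
        calc ∑ ab ∈ Finset.HasAntidiagonal.antidiagonal n, pp ab.1 * sigma2 ab.2
            = ∑ ab ∈ Finset.HasAntidiagonal.antidiagonal n, ∑ k ∈ Finset.Icc 1 n,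
                pp ab.1 * (if 0 < ab.2 ∧ k ∣ ab.2 then (k : ℚ) ^ 2 else 0) := by
              apply Finset.sum_congr rfl
              intro ab hab
              rw [hsigma ab hab, Finset.mul_sum]
          _ = ∑ k ∈ Finset.Icc 1 n, ∑ ab ∈ Finset.HasAntidiagonal.antidiagonal n,
                pp ab.1 * (if 0 < ab.2 ∧ k ∣ ab.2 then (k : ℚ) ^ 2 else 0) :=
              Finset.sum_comm
          _ = ∑ k ∈ Finset.Icc 1 n,
                (∑ m ∈ Finset.Icc 1 (n / k), pp (n - m * k)) * (k : ℚ) ^ 2 := by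
              apply Finset.sum_congr rfl
              intro k hk
              obtain ⟨hk1, _⟩ := Finset.mem_Icc.mp hk
              rw [← antidiag_sum n k hk1 pp, Finset.sum_mul]
              apply Finset.sum_congr rfl
              intro ab _
              split_ifs <;> ring

end PartsSqAux

/-- ∑_{n≥1} Qⁿ (∑_{μ⊢n} ∑ᵢ μᵢ²) = P(Q)·E₃(Q). -/
theorem partition_parts_sq_sum_generating_series
    (P E3 : PowerSeries ℚ) (hP : IsPartitionProd P) (hE3 : IsE3 E3) :
    (PowerSeries.mk fun n => if n = 0 then 0 else
      ∑ μ : Nat.Partition n, ((μ.parts.map fun a => (a : ℚ) ^ 2).sum)) = P * E3 := by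
  ext n
  rw [PowerSeries.coeff_mk, PowerSeries.coeff_mul]
  have hco : ∀ ab : ℕ × ℕ,
      PowerSeries.coeff ab.1 P * PowerSeries.coeff ab.2 E3 =
        PartsSqAux.pp ab.1 * PartsSqAux.sigma2 ab.2 := fun ab => by
    rw [hP ab.1, hE3 ab.2, PartsSqAux.coeff_partition_prod, PartsSqAux.coeff_E3_trunc]
  rw [Finset.sum_congr rfl fun ab _ => hco ab, ← PartsSqAux.key n]
  split_ifs with h
  · subst h
    symm
    apply Finset.sum_eq_zero
    intro μ _
    have : μ.parts = 0 := by
      apply Multiset.eq_zero_of_forall_notMem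
      intro a ha
      exact absurd (Multiset.sum_eq_zero_iff.mp μ.parts_sum a ha) (μ.parts_pos ha).ne'
    simp [this]
  · rfl

end
end

section
/- Define Tr_n(q) = ∑_{μ ⊢ n} ∑_i ( (μ_i²/2)·((−q)^{μ_i}+1)/((−q)^{μ_i}−1) − (μ_i/2)·((−q)+1)/((−q)−1) ). Then under the substitution −q = e^{iu}, the generating function identity (−i)·∑_{n≥1} Tr_n(q) Q^n = P(Q)·B(u,Q) holds, where P(Q) = ∏_{m≥1}(1−Q^m)^{-1} and B(u,Q) = ∑_{g≥1} ∑_{m≥1} (|B_{2g−2}|/(2g−2)!)·(σ_{2g−1}(m) − σ_1(m))·Q^m·u^{2g−3}. -/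
open PowerSeries Finset

noncomputable section

namespace TraceAux

noncomputable section

variable {α : Type*}

open scoped Classical

/-- A convenience constructor for the power series whose coefficients indicate a subset. -/
def indicatorSeries (α : Type*) [Semiring α] (s : Set ℕ) : PowerSeries α :=
  PowerSeries.mk fun n => if n ∈ s then 1 else 0

theorem coeff_indicator (s : Set ℕ) [Semiring α] (n : ℕ) :
    coeff n (indicatorSeries α s) = if n ∈ s then 1 else 0 :=
  coeff_mk _ _

theorem constantCoeff_indicator (s : Set ℕ) [Semiring α] :
    constantCoeff (indicatorSeries α s) = if 0 ∈ s then 1 else 0 :=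
  rfl

theorem num_series' [Field α] (i : ℕ) :
    (1 - (X : PowerSeries α) ^ (i + 1))⁻¹ = indicatorSeries α {k | i + 1 ∣ k} := by
  rw [PowerSeries.inv_eq_iff_mul_eq_one]
  · ext n
    cases n with
    | zero => simp [mul_sub, zero_pow, constantCoeff_indicator]
    | succ n =>
      simp only [coeff_one, if_false, mul_sub, mul_one, coeff_indicator,
        LinearMap.map_sub, reduceCtorEq]
      simp_rw [coeff_mul, coeff_X_pow, coeff_indicator, @boole_mul _ _ _ _]
      erw [@sum_ite _ _ _ _ _ (fun _ => Classical.propDecidable _), sum_ite]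
      simp_rw [@filter_filter _ _ _ _ _, sum_const_zero, add_zero, sum_const, nsmul_eq_mul, mul_one,
        sub_eq_iff_eq_add, zero_add]
      symm
      split_ifs with h
      · suffices #{a ∈ antidiagonal (n + 1) | i + 1 ∣ a.fst ∧ a.snd = i + 1} = 1 by
          simp only [Set.mem_setOf_eq]; convert congr_arg ((↑) : ℕ → α) this; norm_cast
        rw [card_eq_one]
        cases' h with p hp
        refine ⟨((i + 1) * (p - 1), i + 1), ?_⟩
        ext ⟨a₁, a₂⟩
        simp only [mem_filter, Prod.mk.injEq, Finset.HasAntidiagonal.mem_antidiagonal, mem_singleton]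
        constructor
        · rintro ⟨a_left, ⟨a, rfl⟩, rfl⟩
          refine ⟨?_, rfl⟩
          rw [Nat.mul_sub_left_distrib, ← hp, ← a_left, mul_one, Nat.add_sub_cancel]
        · rintro ⟨rfl, rfl⟩
          match p with
          | 0 => rw [mul_zero] at hp; cases hp
          | p + 1 => rw [hp]; simp [mul_add]
      · suffices #{a ∈ antidiagonal (n + 1) | i + 1 ∣ a.fst ∧ a.snd = i + 1} = 0 by
          simp only [Set.mem_setOf_eq]; convert congr_arg ((↑) : ℕ → α) this; norm_cast
        rw [card_eq_zero]
        apply eq_empty_of_forall_notMem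
        simp only [Prod.forall, mem_filter, not_and, Finset.HasAntidiagonal.mem_antidiagonal]
        rintro _ h₁ h₂ ⟨a, rfl⟩ rfl
        apply h
        simp [← h₂]
  · simp [zero_pow, map_sub, constantCoeff_X]

-- The main workhorse of the partition theorem proof.
theorem partialGF_prop (α : Type*) [CommSemiring α] (n : ℕ) (s : Finset ℕ) (hs : ∀ i ∈ s, 0 < i)
    (c : ℕ → Set ℕ) (hc : ∀ i, i ∉ s → 0 ∈ c i) :
    #{p : n.Partition | (∀ j, p.parts.count j ∈ c j) ∧ ∀ j ∈ p.parts, j ∈ s} =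
      coeff n (∏ i ∈ s, indicatorSeries α ((· * i) '' c i)) := by
  simp_rw [coeff_prod, coeff_indicator, prod_boole, sum_boole]
  apply congr_arg
  simp only [mem_univ, forall_true_left, not_and, not_forall, exists_prop,
    Set.mem_image, not_exists]
  set φ : (a : Nat.Partition n) →
    a ∈ filter (fun p ↦ (∀ (j : ℕ), Multiset.count j p.parts ∈ c j) ∧ ∀ j ∈ p.parts, j ∈ s) univ →
    ℕ →₀ ℕ := fun p _ => {
      toFun := fun i => Multiset.count i p.parts • i
      support := Finset.filter (fun i => i ≠ 0) p.parts.toFinset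
      mem_support_toFun := fun a => by
        simp only [smul_eq_mul, ne_eq, mul_eq_zero, Multiset.count_eq_zero]
        rw [not_or, not_not]
        simp only [Multiset.mem_toFinset, not_not, mem_filter] }
  refine Finset.card_bij φ ?_ ?_ ?_
  · intro a ha
    simp only [φ, not_forall, not_exists, not_and, exists_prop, mem_filter]
    rw [mem_finsuppAntidiag]
    dsimp only [ne_eq, smul_eq_mul, id_eq, eq_mpr_eq_cast, le_eq_subset, Finsupp.coe_mk]
    simp only [mem_univ, forall_true_left, not_and, not_forall, exists_prop,
      mem_filter, true_and] at ha
    refine ⟨⟨?_, fun i ↦ ?_⟩, fun i _ ↦ ⟨a.parts.count i, ha.1 i, rfl⟩⟩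
    · conv_rhs => simp [← a.parts_sum]
      rw [sum_multiset_count_of_subset _ s]
      · simp only [smul_eq_mul]
      · intro i
        simp only [Multiset.mem_toFinset, not_not, mem_filter]
        apply ha.2
    · simp only [ne_eq, Multiset.mem_toFinset, not_not, mem_filter, and_imp]
      exact fun hi _ ↦ ha.2 i hi
  · intro p₁ hp₁ p₂ hp₂ h
    apply Nat.Partition.ext
    simp only [true_and, mem_univ, mem_filter] at hp₁ hp₂
    ext i
    simp only [φ, ne_eq, Multiset.mem_toFinset, not_not, smul_eq_mul, Finsupp.mk.injEq] at h
    by_cases hi : i = 0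
    · rw [hi]
      rw [Multiset.count_eq_zero_of_notMem]
      · rw [Multiset.count_eq_zero_of_notMem]
        intro a; exact Nat.lt_irrefl 0 (hs 0 (hp₂.2 0 a))
      intro a; exact Nat.lt_irrefl 0 (hs 0 (hp₁.2 0 a))
    · rw [← mul_left_inj' hi]
      rw [funext_iff] at h
      exact h.2 i
  · simp only [φ, mem_filter, mem_finsuppAntidiag, mem_univ, exists_prop, true_and, and_assoc]
    rintro f ⟨hf, hf₃, hf₄⟩
    have hf' : f ∈ finsuppAntidiag s n := mem_finsuppAntidiag.mpr ⟨hf, hf₃⟩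
    simp only [mem_finsuppAntidiag] at hf'
    refine ⟨⟨∑ i ∈ s, Multiset.replicate (f i / i) i, ?_, ?_⟩, ?_, ?_, ?_⟩
    · intro i hi
      simp only [exists_prop, Multiset.mem_sum, mem_map, Function.Embedding.coeFn_mk] at hi
      rcases hi with ⟨t, ht, z⟩
      apply hs
      rwa [Multiset.eq_of_mem_replicate z]
    · simp_rw [Multiset.sum_sum, Multiset.sum_replicate, Nat.nsmul_eq_mul]
      rw [← hf'.1]
      refine sum_congr rfl fun i hi => Nat.div_mul_cancel ?_
      rcases hf₄ i hi with ⟨w, _, hw₂⟩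
      rw [← hw₂]
      exact dvd_mul_left _ _
    · intro i
      simp_rw [Multiset.count_sum', Multiset.count_replicate, sum_ite_eq']
      split_ifs with h
      · rcases hf₄ i h with ⟨w, hw₁, hw₂⟩
        rwa [← hw₂, Nat.mul_div_cancel _ (hs i h)]
      · exact hc _ h
    · intro i hi
      rw [Multiset.mem_sum] at hi
      rcases hi with ⟨j, hj₁, hj₂⟩
      rwa [Multiset.eq_of_mem_replicate hj₂]
    · ext i
      simp_rw [Multiset.count_sum', Multiset.count_replicate, sum_ite_eq']
      simp only [ne_eq, Multiset.mem_toFinset, not_not, smul_eq_mul, ite_mul,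
        zero_mul, Finsupp.coe_mk]
      split_ifs with h
      · apply Nat.div_mul_cancel
        rcases hf₄ i h with ⟨w, _, hw₂⟩
        apply Dvd.intro_left _ hw₂
      · apply symm
        rw [← Finsupp.notMem_support_iff]
        exact notMem_mono hf'.2 h

/-- The number of partitions of `n` equals the `n`-th coefficient of the truncated product. -/
theorem card_partition_eq_coeff (n : ℕ) :
    (Fintype.card (Nat.Partition n) : ℚ) =
      PowerSeries.coeff n (∏ k ∈ Finset.Icc 1 n, (1 - (PowerSeries.X : PowerSeries ℚ) ^ k)⁻¹) := by
  have h := partialGF_prop ℚ n (Finset.Icc 1 n) (fun i hi => (Finset.mem_Icc.mp hi).1)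
    (fun _ => Set.univ) (fun _ _ => trivial)
  rw [Finset.filter_true_of_mem, Finset.card_univ] at h
  · rw [h]
    apply congr_arg
    refine Finset.prod_congr rfl fun i hi => ?_
    obtain ⟨j, rfl⟩ : ∃ j, i = j + 1 := ⟨i - 1, by have := (Finset.mem_Icc.mp hi).1; omega⟩
    rw [num_series']
    have hset : ((· * (j + 1)) '' Set.univ : Set ℕ) = {k | j + 1 ∣ k} := by
      ext k
      simp only [Set.mem_image, Set.mem_univ, true_and, Set.mem_setOf_eq]
      constructor
      · rintro ⟨x, rfl⟩; exact Dvd.intro_left x rfl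
      · rintro ⟨x, rfl⟩; exact ⟨x, mul_comm _ _⟩
    rw [hset]
  · intro p _
    refine ⟨fun j => trivial, fun j hj => Finset.mem_Icc.mpr ⟨p.parts_pos hj, ?_⟩⟩
    exact p.parts_sum ▸ Multiset.le_sum_of_mem hj

theorem card_count_ge (N r k : ℕ) (hr : 0 < r) (hrk : k * r ≤ N) :
    (Finset.univ.filter fun μ : Nat.Partition N => k ≤ μ.parts.count r).card
      = Fintype.card (Nat.Partition (N - k * r)) := by
  rw [Fintype.card]
  refine Finset.card_bij'
    (fun μ hμ => ⟨μ.parts - Multiset.replicate k r, ?_, ?_⟩)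
    (fun ν _ => ⟨ν.parts + Multiset.replicate k r, ?_, ?_⟩) ?_ ?_ ?_ ?_
  · intro i hi
    exact μ.parts_pos (Multiset.mem_of_le (Multiset.sub_le_self _ _) hi)
  · have hle : Multiset.replicate k r ≤ μ.parts :=
      Multiset.le_count_iff_replicate_le.mp (Finset.mem_filter.mp hμ).2
    have h1 : μ.parts - Multiset.replicate k r + Multiset.replicate k r = μ.parts :=
      tsub_add_cancel_of_le hle
    have h2 := congrArg Multiset.sum h1
    rw [Multiset.sum_add, Multiset.sum_replicate, smul_eq_mul, μ.parts_sum] at h2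
    omega
  · intro i hi
    rcases Multiset.mem_add.mp hi with h | h
    · exact ν.parts_pos h
    · rw [Multiset.eq_of_mem_replicate h]; exact hr
  · rw [Multiset.sum_add, Multiset.sum_replicate, smul_eq_mul, ν.parts_sum]
    omega
  · intro μ hμ; exact Finset.mem_univ _
  · intro ν hν
    rw [Finset.mem_filter]
    refine ⟨Finset.mem_univ _, ?_⟩
    rw [Multiset.count_add, Multiset.count_replicate_self]
    omega
  · intro μ hμ
    apply Nat.Partition.ext
    exact tsub_add_cancel_of_le
      (Multiset.le_count_iff_replicate_le.mp (Finset.mem_filter.mp hμ).2)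
  · intro ν hν
    apply Nat.Partition.ext
    exact add_tsub_cancel_right _ _

theorem count_mul_le (N r : ℕ) (μ : Nat.Partition N) (hr : 0 < r) :
    μ.parts.count r * r ≤ N := by
  have hle : Multiset.replicate (μ.parts.count r) r ≤ μ.parts :=
    Multiset.le_count_iff_replicate_le.mp le_rfl
  obtain ⟨u, hu⟩ := Multiset.le_iff_exists_add.mp hle
  have := congrArg Multiset.sum hu
  rw [Multiset.sum_add, Multiset.sum_replicate, smul_eq_mul, μ.parts_sum] at this
  omega

theorem sum_count_eq (N r : ℕ) (hr : 0 < r) :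
    ∑ μ : Nat.Partition N, μ.parts.count r =
      ∑ k ∈ Finset.Icc 1 N, if k * r ≤ N then Fintype.card (Nat.Partition (N - k * r)) else 0 := by
  have hcount : ∀ μ : Nat.Partition N, μ.parts.count r =
      ∑ k ∈ Finset.Icc 1 N, if k ≤ μ.parts.count r then 1 else 0 := by
    intro μ
    rw [← Finset.card_filter]
    have hcle : μ.parts.count r ≤ N := by
      have := count_mul_le N r μ hr; nlinarith
    have : (Finset.Icc 1 N).filter (fun k => k ≤ μ.parts.count r) =
        Finset.Icc 1 (μ.parts.count r) := by
      ext k; simp only [Finset.mem_filter, Finset.mem_Icc]; omega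
    rw [this, Nat.card_Icc]
    omega
  rw [Finset.sum_congr rfl fun μ _ => hcount μ, Finset.sum_comm]
  refine Finset.sum_congr rfl fun k hk => ?_
  rw [← Finset.card_filter]
  split_ifs with h
  · exact card_count_ge N r k hr h
  · rw [Finset.card_eq_zero]
    apply Finset.eq_empty_of_forall_notMem
    intro μ hμ
    have := count_mul_le N r μ hr
    have hk2 := (Finset.mem_filter.mp hμ).2
    nlinarith

theorem partition_sum_eq {M : Type*} [AddCommMonoid M] (N : ℕ) (f : ℕ → M) :
    ∑ μ : Nat.Partition N, (μ.parts.map f).sum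
      = ∑ m ∈ Finset.Icc 1 N,
          Fintype.card (Nat.Partition (N - m)) • ∑ d ∈ m.divisors, f d := by
  have step1 : ∀ μ : Nat.Partition N,
      (μ.parts.map f).sum = ∑ r ∈ Finset.Icc 1 N, μ.parts.count r • f r := by
    intro μ
    rw [Finset.sum_multiset_map_count]
    refine Finset.sum_subset ?_ ?_
    · intro r hr
      rw [Multiset.mem_toFinset] at hr
      refine Finset.mem_Icc.mpr ⟨μ.parts_pos hr, ?_⟩
      exact μ.parts_sum ▸ Multiset.le_sum_of_mem hr
    · intro r _ hr
      rw [Multiset.mem_toFinset] at hr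
      rw [Multiset.count_eq_zero_of_notMem hr, zero_smul]
  rw [Finset.sum_congr rfl fun μ _ => step1 μ, Finset.sum_comm]
  have step2 : ∀ r ∈ Finset.Icc 1 N,
      ∑ μ : Nat.Partition N, μ.parts.count r • f r
        = ∑ k ∈ Finset.Icc 1 N,
            if k * r ≤ N then Fintype.card (Nat.Partition (N - k * r)) • f r else 0 := by
    intro r hr
    rw [← Finset.sum_smul, sum_count_eq N r (Finset.mem_Icc.mp hr).1, Finset.sum_smul]
    refine Finset.sum_congr rfl fun k _ => ?_
    split_ifs with h
    · rfl
    · rw [zero_smul]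
  rw [Finset.sum_congr rfl step2]
  -- now reindex pairs (r, k) with k * r ≤ N to pairs (m, d) with d ∣ m
  rw [← Finset.sum_product']
  rw [← Finset.sum_filter]
  have rhs_eq : ∑ m ∈ Finset.Icc 1 N,
      Fintype.card (Nat.Partition (N - m)) • ∑ d ∈ m.divisors, f d
      = ∑ x ∈ (Finset.Icc 1 N).sigma (fun m => m.divisors),
          Fintype.card (Nat.Partition (N - x.1)) • f x.2 := by
    rw [Finset.sum_sigma]
    exact Finset.sum_congr rfl fun m _ => Finset.smul_sum
  rw [rhs_eq]
  refine Finset.sum_nbij' (fun p => ⟨p.2 * p.1, p.1⟩) (fun x => (x.2, x.1 / x.2))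
    ?_ ?_ ?_ ?_ ?_
  · rintro ⟨r, k⟩ hp
    simp only [Finset.mem_filter, Finset.mem_product, Finset.mem_Icc] at hp
    obtain ⟨⟨⟨hr1, _⟩, ⟨hk1, _⟩⟩, hle⟩ := hp
    refine Finset.mem_sigma.mpr ⟨Finset.mem_Icc.mpr ⟨?_, hle⟩, ?_⟩
    · exact Nat.one_le_iff_ne_zero.mpr (by positivity)
    · exact Nat.mem_divisors.mpr ⟨Dvd.intro_left k rfl, by positivity⟩
  · rintro ⟨m, d⟩ hx
    simp only [Finset.mem_sigma, Finset.mem_Icc, Nat.mem_divisors] at hx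
    obtain ⟨⟨hm1, hmN⟩, hd, hm0⟩ := hx
    have hd1 : 1 ≤ d := Nat.one_le_iff_ne_zero.mpr fun h => hm0 (by simpa [h] using hd)
    have hdm : d ≤ m := Nat.le_of_dvd (by omega) hd
    have hdiv : m / d * d = m := Nat.div_mul_cancel hd
    simp only [Finset.mem_filter, Finset.mem_product, Finset.mem_Icc]
    refine ⟨⟨⟨hd1, le_trans hdm hmN⟩, ⟨?_, ?_⟩⟩, by omega⟩
    · rw [Nat.le_div_iff_mul_le (by omega)]; omega
    · calc m / d ≤ m := Nat.div_le_self m d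
        _ ≤ N := hmN
  · rintro ⟨r, k⟩ hp
    simp only [Finset.mem_filter, Finset.mem_product, Finset.mem_Icc] at hp
    have hr : 0 < r := hp.1.1.1
    simp only [Nat.mul_div_cancel _ hr]
  · rintro ⟨m, d⟩ hx
    simp only [Finset.mem_sigma, Finset.mem_Icc, Nat.mem_divisors] at hx
    have : m / d * d = m := Nat.div_mul_cancel hx.2.1
    simp only [this]
  · rintro ⟨r, k⟩ _
    rfl

end
end TraceAux


/-- `σ_s(m) = ∑_{d ∣ m} d^s`. -/
def sigmaQ (s : ℕ) (m : ℕ) : ℚ := ∑ d ∈ m.divisors, (d : ℚ) ^ s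

/-- The Laurent expansion in `u` of `(-i r/2)·((-q)^r+1)/((-q)^r-1) = -(r/2)cot(ur/2)`
under `-q = e^{iu}`, namely `-1/u + ∑_{h≥0} (|B_{2h}|/(2h)!) r^{2h} u^{2h-1}`. -/
def cotL (r : ℕ) : LaurentSeries ℚ :=
  -(HahnSeries.single (-1 : ℤ) (1 : ℚ)) +
    (HahnSeries.single (-1 : ℤ) (1 : ℚ) : LaurentSeries ℚ) *
      HahnSeries.ofPowerSeries ℤ ℚ
        (PowerSeries.mk fun n =>
          if Even n then |bernoulli n| * (r : ℚ) ^ n / n.factorial else 0)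

/-- The Laurent expansion in `u` of `(-i)·Tr_n(q)` under `-q = e^{iu}`:
each part `r` of each partition `μ ⊢ n` contributes `r·(cotL r - cotL 1)`. -/
def trExpansion (n : ℕ) : LaurentSeries ℚ :=
  ∑ μ : Nat.Partition n,
    ((μ.parts.map fun r : ℕ => (Nat.cast r : LaurentSeries ℚ) * (cotL r - cotL 1)).sum)

/-- `B(u,Q)`: the coefficient of `Q^m` is
`∑_{g≥1} (|B_{2g-2}|/(2g-2)!)(σ_{2g-1}(m) - σ₁(m)) u^{2g-3}`, written with `j = 2g-2` as
`u⁻¹ · ∑_{j even} (|B_j|/j!)(σ_{j+1}(m) - σ₁(m)) u^j`. -/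
def Bseries : PowerSeries (LaurentSeries ℚ) :=
  PowerSeries.mk fun m =>
    (HahnSeries.single (-1 : ℤ) (1 : ℚ) : LaurentSeries ℚ) *
      HahnSeries.ofPowerSeries ℤ ℚ
        (PowerSeries.mk fun j =>
          if Even j then |bernoulli j| / j.factorial * (sigmaQ (j + 1) m - sigmaQ 1 m)
          else 0)


namespace TraceAux

/-- `g r` : the power-series part of `r·(cotL r - cotL 1)`. -/
def gAux (r : ℕ) : PowerSeries ℚ :=
  PowerSeries.mk fun n =>
    if Even n then |bernoulli n| / n.factorial * ((r : ℚ) ^ (n + 1) - r) else 0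

/-- `b m` : the power-series part of the coefficient of `Q^m` in `Bseries`. -/
def bAux (m : ℕ) : PowerSeries ℚ :=
  PowerSeries.mk fun j =>
    if Even j then |bernoulli j| / j.factorial * (sigmaQ (j + 1) m - sigmaQ 1 m) else 0

/-- The additive map `F ↦ u⁻¹·F(u)`. -/
def HAux : PowerSeries ℚ →+ LaurentSeries ℚ :=
  (AddMonoidHom.mulLeft ((HahnSeries.single (-1 : ℤ) (1 : ℚ)) : LaurentSeries ℚ)).comp
    (HahnSeries.ofPowerSeries ℤ ℚ).toAddMonoidHom

theorem cotL_eq (r : ℕ) :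
    (Nat.cast r : LaurentSeries ℚ) * (cotL r - cotL 1) = HAux (gAux r) := by
  have hcast : (Nat.cast r : LaurentSeries ℚ)
      = HahnSeries.ofPowerSeries ℤ ℚ (Nat.cast r : PowerSeries ℚ) := by
    rw [map_natCast]
  rw [cotL, cotL, hcast, HAux]
  simp only [AddMonoidHom.coe_comp, AddMonoidHom.coe_mulLeft, Function.comp_apply,
    RingHom.toAddMonoidHom_eq_coe, RingHom.coe_coe]
  rw [show ∀ a b c : LaurentSeries ℚ, (-a + a * b) - (-a + a * c) = a * (b - c) from
    fun a b c => by ring, ← map_sub, mul_comm, mul_assoc, ← map_mul]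
  have hC : (Nat.cast r : PowerSeries ℚ) = PowerSeries.C (r : ℚ) := by
    rw [map_natCast]
  have hg : ((PowerSeries.mk fun n =>
        if Even n then |bernoulli n| * (r : ℚ) ^ n / n.factorial else 0) -
      PowerSeries.mk fun n =>
        if Even n then |bernoulli n| * ((1 : ℕ) : ℚ) ^ n / n.factorial else 0) *
      (Nat.cast r : PowerSeries ℚ) = gAux r := by
    ext n
    rw [hC, mul_comm, PowerSeries.coeff_C_mul, map_sub]
    simp only [PowerSeries.coeff_mk, gAux]
    by_cases h : Even n
    · simp only [if_pos h, Nat.cast_one, one_pow]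
      field_simp
      ring
    · simp only [if_neg h, sub_zero, mul_zero]
  rw [hg]
  rfl

theorem divisor_sum_g (m : ℕ) : ∑ d ∈ m.divisors, gAux d = bAux m := by
  classical
  ext j
  rw [map_sum]
  simp only [gAux, bAux, PowerSeries.coeff_mk]
  by_cases h : Even j
  · simp only [if_pos h, sigmaQ, Finset.mul_sum, ← Finset.sum_sub_distrib, mul_sub, pow_one]
  · simp only [if_neg h, Finset.sum_const_zero]

theorem trExpansion_eq (N : ℕ) :
    trExpansion N =
      ∑ m ∈ Finset.Icc 1 N,
        Fintype.card (Nat.Partition (N - m)) • HAux (bAux m) := by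
  rw [trExpansion]
  have h1 : ∀ μ : Nat.Partition N,
      ((μ.parts.map fun r : ℕ => (Nat.cast r : LaurentSeries ℚ) * (cotL r - cotL 1)).sum)
        = HAux ((μ.parts.map gAux).sum) := by
    intro μ
    rw [map_multiset_sum, Multiset.map_map]
    exact congrArg Multiset.sum (Multiset.map_congr rfl fun r _ => cotL_eq r)
  rw [Finset.sum_congr rfl fun μ _ => h1 μ, ← map_sum, partition_sum_eq N gAux, map_sum]
  refine Finset.sum_congr rfl fun m _ => ?_
  rw [map_nsmul, divisor_sum_g]

theorem bAux_zero : TraceAux.bAux 0 = 0 := by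
  ext j
  simp [TraceAux.bAux, sigmaQ]

end TraceAux

/-- Under `-q = e^{iu}`: `(-i)·∑_{n≥1} Tr_n(q) Q^n = P(Q)·B(u,Q)`, as an identity of
power series in `Q` with Laurent-series-in-`u` coefficients. -/
theorem trace_generating_series_eq_P_mul_B
    (P : PowerSeries ℚ) (hP : IsPartitionProd P) :
    (PowerSeries.mk fun n => if n = 0 then 0 else trExpansion n) =
      PowerSeries.map (HahnSeries.C : ℚ →+* LaurentSeries ℚ) P * Bseries := by
  refine PowerSeries.ext fun N => ?_
  rw [PowerSeries.coeff_mk, PowerSeries.coeff_mul]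
  have hB : ∀ j : ℕ, PowerSeries.coeff j Bseries = TraceAux.HAux (TraceAux.bAux j) := by
    intro j
    rw [Bseries, PowerSeries.coeff_mk]
    rfl
  have hP' : ∀ i, PowerSeries.coeff i P = (Fintype.card (Nat.Partition i) : ℚ) := fun i => by
    rw [hP i, ← TraceAux.card_partition_eq_coeff]
  have hterm : ∀ i j : ℕ,
      PowerSeries.coeff i (PowerSeries.map (HahnSeries.C : ℚ →+* LaurentSeries ℚ) P) *
        PowerSeries.coeff j Bseries
        = Fintype.card (Nat.Partition i) • TraceAux.HAux (TraceAux.bAux j) := by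
    intro i j
    rw [PowerSeries.coeff_map, hP' i, hB j, map_natCast, nsmul_eq_mul]
  rw [Finset.Nat.sum_antidiagonal_eq_sum_range_succ_mk]
  simp_rw [hterm]
  rw [← Finset.sum_range_reflect]
  have hrefl : ∀ j ∈ Finset.range (N + 1),
      Fintype.card (Nat.Partition (N + 1 - 1 - j)) •
          TraceAux.HAux (TraceAux.bAux (N - (N + 1 - 1 - j)))
        = Fintype.card (Nat.Partition (N - j)) • TraceAux.HAux (TraceAux.bAux j) := by
    intro j hj
    rw [Finset.mem_range] at hj
    have h1 : N + 1 - 1 - j = N - j := by omega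
    rw [h1]
    have h2 : N - (N - j) = j := by omega
    rw [h2]
  rw [Finset.sum_congr rfl hrefl]
  have hrange : Finset.range (N + 1) = insert 0 (Finset.Icc 1 N) := by
    ext x
    simp only [Finset.mem_range, Finset.mem_insert, Finset.mem_Icc]
    omega
  rw [hrange, Finset.sum_insert (by simp)]
  simp only [TraceAux.bAux_zero, map_zero, smul_zero, zero_add]
  by_cases hN : N = 0
  · subst hN
    simp
  · rw [if_neg hN, TraceAux.trExpansion_eq N]

end
end

section
/- Every symmetric polynomial expression in the functions f₁, …, f_n and their partial derivatives (with respect to variables z₁, …, z_m) lies in the localization at the discriminant Δ of the algebra generated by the elementary symmetric functions s₁, …, s_n of the f_i and all their partial derivatives. Formally: SymDf ⊆ K[Ds][1/Δ], where SymDf = K[Df]^{S_n} is the S_n-invariant subalgebra of the polynomial algebra on all partial derivatives of the f_i, Ds is the set of all partial derivatives of the s_i, and Δ = ∏_{i≠j}(f_i − f_j). -/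
open MvPolynomial Finset

noncomputable section

variable (K : Type*) [Field K] [CharZero K] (n m : ℕ)

/-- The variable `(i, α)` represents the iterated partial derivative `∂^α fᵢ` of the abstract
function `fᵢ` of the variables `z₁,…,z_m`.  `DiffAlg K n m` is the polynomial algebra
`K[Df]` on all these symbols. -/
abbrev DiffAlg := MvPolynomial (Fin n × (Fin m →₀ ℕ)) K

/-- The function `fᵢ` itself. -/
def fVar (i : Fin n) : DiffAlg K n m := MvPolynomial.X (i, 0)

/-- The derivation `∂/∂z_j`, sending the symbol `∂^α fᵢ` to `∂^{α + e_j} fᵢ`. -/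
def pd (j : Fin m) : Derivation K (DiffAlg K n m) (DiffAlg K n m) :=
  MvPolynomial.mkDerivation K (fun v => MvPolynomial.X (v.1, v.2 + Finsupp.single j 1))

/-- The signed elementary symmetric function `s_k = (-1)^k e_k(f₁,…,f_n)`. -/
def sFun (k : ℕ) : DiffAlg K n m :=
  (-1 : DiffAlg K n m) ^ k *
    ∑ T ∈ Finset.univ.powersetCard k, ∏ i ∈ T, fVar K n m i

/-- `Ds`: the set of all iterated partial derivatives of `s₁,…,s_n`. -/
def Ds : Set (DiffAlg K n m) :=
  {p | ∃ k ∈ Finset.Icc 1 n, ∃ w : List (Fin m),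
    p = w.foldr (fun j q => pd K n m j q) (sFun K n m k)}

/-- The discriminant `Δ = ∏_{i≠j}(fᵢ - fⱼ)` (ordered pairs). -/
def Delta : DiffAlg K n m :=
  ∏ p ∈ Finset.univ.filter (fun p : Fin n × Fin n => p.1 ≠ p.2),
    (fVar K n m p.1 - fVar K n m p.2)

set_option linter.unusedSectionVars false
-- chunk 1 : basic lemmas
lemma pd_X (j : Fin m) (v : Fin n × (Fin m →₀ ℕ)) :
    pd K n m j (MvPolynomial.X v) = MvPolynomial.X (v.1, v.2 + Finsupp.single j 1) :=
  mkDerivation_X _ _ _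

def act (σ : Equiv.Perm (Fin n)) : DiffAlg K n m →ₐ[K] DiffAlg K n m :=
  rename (fun v => (σ v.1, v.2))

lemma act_fVar (σ : Equiv.Perm (Fin n)) (i : Fin n) :
    act K n m σ (fVar K n m i) = fVar K n m (σ i) := rename_X _ _

lemma act_pd (σ : Equiv.Perm (Fin n)) (j : Fin m) (x : DiffAlg K n m) :
    act K n m σ (pd K n m j x) = pd K n m j (act K n m σ x) := by
  induction x using MvPolynomial.induction_on with
  | C a => simp [← MvPolynomial.algebraMap_eq]
  | add p q hp hq => simp [map_add, hp, hq]
  | mul_X p v hp =>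
      rw [Derivation.leibniz, smul_eq_mul, smul_eq_mul, pd_X, map_add, map_mul, map_mul,
        map_mul, hp, act, rename_X, rename_X, Derivation.leibniz, smul_eq_mul, smul_eq_mul,
        pd_X]

def phi : MvPolynomial (Fin n) K →ₐ[K] DiffAlg K n m := aeval (fVar K n m)

lemma phi_rename (σ : Equiv.Perm (Fin n)) (q : MvPolynomial (Fin n) K) :
    act K n m σ (phi K n m q) = phi K n m (rename (⇑σ) q) := by
  rw [phi, aeval_rename]
  have : (act K n m σ).comp (aeval (fVar K n m)) = aeval ((fVar K n m) ∘ ⇑σ) := by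
    rw [comp_aeval]
    congr 1
    funext i
    exact act_fVar K n m σ i
  exact congrFun (congrArg DFunLike.coe this) q

lemma sFun_eq (k : ℕ) :
    sFun K n m k = (-1 : DiffAlg K n m) ^ k * phi K n m (esymm (Fin n) K k) := by
  rw [sFun, esymm, phi, map_sum]
  congr 1
  refine Finset.sum_congr rfl fun T _ => ?_
  rw [map_prod]
  exact Finset.prod_congr rfl fun i _ => (aeval_X _ _).symm

lemma act_sFun (σ : Equiv.Perm (Fin n)) (k : ℕ) :
    act K n m σ (sFun K n m k) = sFun K n m k := by
  rw [sFun_eq, map_mul, map_pow, map_neg, map_one, phi_rename, esymm_isSymmetric _ _ k σ,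
    ← sFun_eq]

lemma act_Ds (σ : Equiv.Perm (Fin n)) {x : DiffAlg K n m} (hx : x ∈ Ds K n m) :
    act K n m σ x = x := by
  obtain ⟨k, -, w, rfl⟩ := hx
  induction w with
  | nil => exact act_sFun K n m σ k
  | cons j w ih => simpa [List.foldr_cons] using (act_pd K n m σ j _).trans (by rw [ih])

lemma act_Delta (σ : Equiv.Perm (Fin n)) : act K n m σ (Delta K n m) = Delta K n m := by
  rw [Delta, map_prod]
  refine Finset.prod_nbij' (fun p => (σ p.1, σ p.2)) (fun p => (σ⁻¹ p.1, σ⁻¹ p.2)) ?_ ?_ ?_ ?_ ?_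
  · intro a ha
    simp only [mem_filter, mem_univ, true_and] at ha ⊢
    exact fun h => ha (σ.injective (by simpa using h))
  · intro a ha
    simp only [mem_filter, mem_univ, true_and] at ha ⊢
    exact fun h => ha (σ⁻¹.injective (by simpa using h))
  · intro a _; simp
  · intro a _; simp
  · intro a _
    rw [map_sub, act_fVar, act_fVar]
-- chunk 2 : Vieta facts
lemma factA :
    (∏ l : Fin n, (Polynomial.X - Polynomial.C (fVar K n m l))) =
      ∑ k ∈ Finset.range (n + 1),
        Polynomial.C (sFun K n m k) * Polynomial.X ^ (n - k) := by
  have hcard : Multiset.card (Finset.univ.val.map (fun l => -(fVar K n m l))) = n := by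
    simp
  have h := Multiset.prod_X_add_C_eq_sum_esymm
    (Finset.univ.val.map (fun l => -(fVar K n m l)))
  rw [hcard, Multiset.map_map] at h
  have hL : (∏ l : Fin n, (Polynomial.X - Polynomial.C (fVar K n m l))) =
      (Multiset.map ((fun r => Polynomial.X + Polynomial.C r) ∘ fun l => -(fVar K n m l))
        Finset.univ.val).prod := by
    rw [Finset.prod_eq_multiset_prod]
    refine congrArg _ (Multiset.map_congr rfl fun l _ => ?_)
    simp [sub_eq_add_neg]
  rw [hL, h]
  refine Finset.sum_congr rfl fun k _ => ?_
  congr 2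
  have : (Finset.univ.val.map (fun l => -(fVar K n m l))) =
      Multiset.map Neg.neg (Finset.univ.val.map (fVar K n m)) := by
    rw [Multiset.map_map]; rfl
  rw [this, Multiset.esymm_neg, Finset.esymm_map_val, sFun]

lemma eq1 (i : Fin n) :
    ∑ k ∈ Finset.range (n + 1), sFun K n m k * fVar K n m i ^ (n - k) = 0 := by
  have h := congrArg (Polynomial.eval (fVar K n m i)) (factA K n m)
  rw [Polynomial.eval_prod, Polynomial.eval_finset_sum] at h
  simp only [Polynomial.eval_mul, Polynomial.eval_C, Polynomial.eval_pow,
    Polynomial.eval_X] at h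
  rw [← h]
  apply Finset.prod_eq_zero (Finset.mem_univ i)
  simp

lemma eq2 (i : Fin n) :
    ∑ k ∈ Finset.range (n + 1),
        sFun K n m k * ((n - k : ℕ) : DiffAlg K n m) * fVar K n m i ^ (n - k - 1) =
      ∏ l ∈ Finset.univ.erase i, (fVar K n m i - fVar K n m l) := by
  have hsplit : (∏ l : Fin n, (Polynomial.X - Polynomial.C (fVar K n m l))) =
      (Polynomial.X - Polynomial.C (fVar K n m i)) *
        ∏ l ∈ Finset.univ.erase i, (Polynomial.X - Polynomial.C (fVar K n m l)) :=
    (Finset.mul_prod_erase Finset.univ _ (Finset.mem_univ i)).symm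
  have h := congrArg (fun P => Polynomial.eval (fVar K n m i) (Polynomial.derivative P))
    ((factA K n m).symm.trans hsplit)
  simp only [Polynomial.derivative_mul, Polynomial.derivative_sub, Polynomial.derivative_X,
    Polynomial.derivative_C, sub_zero, one_mul, Polynomial.eval_add, Polynomial.eval_mul,
    Polynomial.eval_sub, Polynomial.eval_X, Polynomial.eval_C, sub_self, zero_mul,
    add_zero] at h
  rw [Polynomial.derivative_sum] at h
  rw [Polynomial.eval_finset_sum] at h
  have hR : ∀ k ∈ Finset.range (n + 1),
      Polynomial.eval (fVar K n m i)
        (Polynomial.derivative (Polynomial.C (sFun K n m k) * Polynomial.X ^ (n - k))) =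
      sFun K n m k * ((n - k : ℕ) : DiffAlg K n m) * fVar K n m i ^ (n - k - 1) := by
    intro k _
    rw [Polynomial.derivative_C_mul_X_pow]
    simp
  rw [Finset.sum_congr rfl hR] at h
  rw [h, Polynomial.eval_prod]
  refine Finset.prod_congr rfl fun l _ => by simp
-- chunk 3 : subalgebras and key identity
def A0 : Subalgebra K (DiffAlg K n m) := Algebra.adjoin K (Ds K n m)

def A : Subalgebra K (DiffAlg K n m) :=
  Algebra.adjoin K (Set.range (fVar K n m) ∪ Ds K n m)

lemma A0_le_A : A0 K n m ≤ A K n m :=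
  Algebra.adjoin_mono Set.subset_union_right

lemma fVar_mem_A (i : Fin n) : fVar K n m i ∈ A K n m :=
  Algebra.subset_adjoin (Or.inl ⟨i, rfl⟩)

lemma Delta_mem_A : Delta K n m ∈ A K n m :=
  prod_mem fun p _ => sub_mem (fVar_mem_A K n m p.1) (fVar_mem_A K n m p.2)

def T : Subalgebra K (DiffAlg K n m) where
  carrier := {x | ∃ N : ℕ, Delta K n m ^ N * x ∈ A K n m}
  mul_mem' := by
    rintro x y ⟨N1, h1⟩ ⟨N2, h2⟩
    exact ⟨N1 + N2, by rw [pow_add]; rw [show Delta K n m ^ N1 * Delta K n m ^ N2 * (x * y) =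
      (Delta K n m ^ N1 * x) * (Delta K n m ^ N2 * y) by ring]; exact mul_mem h1 h2⟩
  add_mem' := by
    rintro x y ⟨N1, h1⟩ ⟨N2, h2⟩
    refine ⟨N1 + N2, ?_⟩
    rw [mul_add, pow_add]
    refine add_mem ?_ ?_
    · rw [show Delta K n m ^ N1 * Delta K n m ^ N2 * x =
        Delta K n m ^ N2 * (Delta K n m ^ N1 * x) by ring]
      exact mul_mem (pow_mem (Delta_mem_A K n m) N2) h1
    · rw [show Delta K n m ^ N1 * Delta K n m ^ N2 * y =
        Delta K n m ^ N1 * (Delta K n m ^ N2 * y) by ring]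
      exact mul_mem (pow_mem (Delta_mem_A K n m) N1) h2
  algebraMap_mem' := fun r => ⟨0, by simpa using (A K n m).algebraMap_mem r⟩

lemma A_le_T : A K n m ≤ T K n m := fun x hx => ⟨0, by simpa using hx⟩

lemma mem_T_of_pow_mul_mem {x : DiffAlg K n m} {N : ℕ}
    (h : Delta K n m ^ N * x ∈ T K n m) : x ∈ T K n m := by
  obtain ⟨M, hM⟩ := h
  exact ⟨M + N, by rwa [pow_add, mul_assoc]⟩

lemma sFun_zero : sFun K n m 0 = 1 := by
  simp [sFun]

lemma sFun_mem_A0 {k : ℕ} (hk : k ≤ n) : sFun K n m k ∈ A0 K n m := by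
  rcases Nat.eq_zero_or_pos k with rfl | hk1
  · rw [sFun_zero]; exact one_mem _
  · exact Algebra.subset_adjoin ⟨k, Finset.mem_Icc.mpr ⟨hk1, hk⟩, [], rfl⟩

lemma pd_sFun_mem_A0 (j : Fin m) {k : ℕ} (hk : k ≤ n) :
    pd K n m j (sFun K n m k) ∈ A0 K n m := by
  rcases Nat.eq_zero_or_pos k with rfl | hk1
  · rw [sFun_zero]
    rw [show (1 : DiffAlg K n m) = algebraMap K _ 1 by simp]
    rw [Derivation.map_algebraMap]
    exact zero_mem _
  · exact Algebra.subset_adjoin ⟨k, Finset.mem_Icc.mpr ⟨hk1, hk⟩, [j], rfl⟩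

lemma pd_fVar (j : Fin m) (i : Fin n) :
    pd K n m j (fVar K n m i) = MvPolynomial.X (i, Finsupp.single j 1) := by
  rw [fVar, pd_X]
  simp

lemma keyid (i : Fin n) (j : Fin m) :
    (∏ l ∈ Finset.univ.erase i, (fVar K n m i - fVar K n m l)) *
        MvPolynomial.X (i, Finsupp.single j 1) =
      - ∑ k ∈ Finset.range (n + 1), fVar K n m i ^ (n - k) * pd K n m j (sFun K n m k) := by
  have h := congrArg (pd K n m j) (eq1 K n m i)
  rw [map_sum, map_zero] at h
  have h2 : ∀ k ∈ Finset.range (n + 1),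
      pd K n m j (sFun K n m k * fVar K n m i ^ (n - k)) =
        (sFun K n m k * ((n - k : ℕ) : DiffAlg K n m) * fVar K n m i ^ (n - k - 1)) *
          MvPolynomial.X (i, Finsupp.single j 1) +
        fVar K n m i ^ (n - k) * pd K n m j (sFun K n m k) := by
    intro k _
    rw [Derivation.leibniz, Derivation.leibniz_pow, pd_fVar]
    simp only [smul_eq_mul, nsmul_eq_mul]
    ring
  rw [Finset.sum_congr rfl h2, Finset.sum_add_distrib, ← Finset.sum_mul, eq2] at h
  linear_combination h
-- chunk 4 : T is pd-closed and contains everything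
lemma Delta_factor (i : Fin n) :
    ∃ h ∈ A K n m,
      Delta K n m = (∏ l ∈ Finset.univ.erase i, (fVar K n m i - fVar K n m l)) * h := by
  classical
  set S := Finset.univ.filter (fun p : Fin n × Fin n => p.1 ≠ p.2) with hS
  refine ⟨∏ p ∈ S.filter (fun p => ¬ p.1 = i), (fVar K n m p.1 - fVar K n m p.2),
    prod_mem fun p _ => sub_mem (fVar_mem_A K n m p.1) (fVar_mem_A K n m p.2), ?_⟩
  rw [Delta, ← Finset.prod_filter_mul_prod_filter_not S (fun p => p.1 = i)]
  congr 1
  refine Finset.prod_nbij' (fun p => p.2) (fun l => (i, l)) ?_ ?_ ?_ ?_ ?_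
  · intro p hp
    simp only [hS, Finset.mem_filter, Finset.mem_univ, true_and, ne_eq] at hp
    simp only [Finset.mem_erase, Finset.mem_univ, and_true]
    exact fun h => hp.1 (hp.2.trans h.symm)
  · intro l hl
    simp only [Finset.mem_erase, Finset.mem_univ, and_true] at hl
    simp only [hS, Finset.mem_filter, Finset.mem_univ, true_and, ne_eq]
    exact ⟨fun h => hl h.symm, trivial⟩
  · intro p hp
    simp only [hS, Finset.mem_filter] at hp
    exact Prod.ext hp.2.symm rfl
  · intro l _; rfl
  · intro p hp
    simp only [hS, Finset.mem_filter] at hp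
    rw [hp.2]

lemma X_single_mem_T (i : Fin n) (j : Fin m) :
    MvPolynomial.X (i, Finsupp.single j 1) ∈ T K n m := by
  obtain ⟨h, hhA, hfac⟩ := Delta_factor K n m i
  refine ⟨1, ?_⟩
  have hc : Delta K n m ^ 1 * MvPolynomial.X (i, Finsupp.single j 1) =
      h * ((∏ l ∈ Finset.univ.erase i, (fVar K n m i - fVar K n m l)) *
        MvPolynomial.X (i, Finsupp.single j 1)) := by
    rw [pow_one, hfac]; ring
  rw [hc, keyid]
  exact mul_mem hhA (neg_mem (sum_mem fun k hk =>
    mul_mem (pow_mem (fVar_mem_A K n m i) _)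
      (A0_le_A K n m (pd_sFun_mem_A0 K n m j (Nat.lt_succ_iff.mp (Finset.mem_range.mp hk))))))

lemma pd_Ds {j : Fin m} {x : DiffAlg K n m} (hx : x ∈ Ds K n m) :
    pd K n m j x ∈ Ds K n m := by
  obtain ⟨k, hk, w, rfl⟩ := hx
  exact ⟨k, hk, j :: w, rfl⟩

lemma pd_A_mem_T (j : Fin m) {a : DiffAlg K n m} (ha : a ∈ A K n m) :
    pd K n m j a ∈ T K n m := by
  induction ha using Algebra.adjoin_induction with
  | mem x hx =>
      rcases hx with ⟨i, rfl⟩ | hx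
      · rw [pd_fVar]
        exact X_single_mem_T K n m i j
      · exact A_le_T K n m (Algebra.subset_adjoin (Or.inr (pd_Ds K n m hx)))
  | algebraMap r => rw [Derivation.map_algebraMap]; exact zero_mem _
  | add x y hx hy ihx ihy => rw [map_add]; exact add_mem ihx ihy
  | mul x y hx hy ihx ihy =>
      rw [Derivation.leibniz, smul_eq_mul, smul_eq_mul]
      exact add_mem (mul_mem (A_le_T K n m hx) ihy) (mul_mem (A_le_T K n m hy) ihx)

lemma T_pd_closed (j : Fin m) {x : DiffAlg K n m} (hx : x ∈ T K n m) :
    pd K n m j x ∈ T K n m := by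
  obtain ⟨N, hN⟩ := hx
  have h1 : pd K n m j (Delta K n m ^ N * x) ∈ T K n m := pd_A_mem_T K n m j hN
  have h2 : pd K n m j (Delta K n m ^ N) ∈ T K n m :=
    pd_A_mem_T K n m j (pow_mem (Delta_mem_A K n m) N)
  have h3 : Delta K n m ^ N * pd K n m j x =
      pd K n m j (Delta K n m ^ N * x) - x * pd K n m j (Delta K n m ^ N) := by
    rw [Derivation.leibniz, smul_eq_mul, smul_eq_mul]
    ring
  exact mem_T_of_pow_mul_mem K n m (h3 ▸ sub_mem h1 (mul_mem ⟨N, hN⟩ h2))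

lemma foldr_pd_X (l : List (Fin m)) (i : Fin n) (α : Fin m →₀ ℕ) :
    l.foldr (fun j q => pd K n m j q) (MvPolynomial.X (i, α)) =
      MvPolynomial.X (i, α + (l.map (fun j => Finsupp.single j 1)).sum) := by
  induction l with
  | nil => simp
  | cons j l ih =>
      have hh : α + (List.map (fun j => Finsupp.single j (1:ℕ)) l).sum + Finsupp.single j 1 =
          α + (Finsupp.single j 1 + (List.map (fun j => Finsupp.single j (1:ℕ)) l).sum) := by
        rw [add_assoc, add_comm ((List.map (fun j => Finsupp.single j (1:ℕ)) l).sum) _]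
      rw [List.foldr_cons, ih, pd_X, List.map_cons, List.sum_cons, hh]

lemma exists_list (α : Fin m →₀ ℕ) :
    ∃ l : List (Fin m), (l.map (fun j => Finsupp.single j 1)).sum = α := by
  induction α using Finsupp.induction with
  | zero => exact ⟨[], rfl⟩
  | single_add a b f _ _ ih =>
      obtain ⟨l, hl⟩ := ih
      refine ⟨List.replicate b a ++ l, ?_⟩
      rw [List.map_append, List.sum_append, hl, List.map_replicate, List.sum_replicate,
        Finsupp.smul_single, smul_eq_mul, mul_one]

lemma X_mem_T (v : Fin n × (Fin m →₀ ℕ)) : MvPolynomial.X v ∈ T K n m := by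
  obtain ⟨i, α⟩ := v
  obtain ⟨l, hl⟩ := exists_list (m := m) α
  have hfold : l.foldr (fun j q => pd K n m j q) (fVar K n m i) = MvPolynomial.X (i, α) := by
    rw [fVar, foldr_pd_X, hl, zero_add]
  rw [← hfold]
  have hbase : fVar K n m i ∈ T K n m := A_le_T K n m (fVar_mem_A K n m i)
  clear hfold hl
  induction l with
  | nil => exact hbase
  | cons j l ih => exact T_pd_closed K n m j ih

lemma all_mem_T (x : DiffAlg K n m) : x ∈ T K n m := by
  have : Algebra.adjoin K (Set.range (MvPolynomial.X :
      Fin n × (Fin m →₀ ℕ) → DiffAlg K n m)) ≤ T K n m :=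
    Algebra.adjoin_le (by rintro y ⟨v, rfl⟩; exact X_mem_T K n m v)
  exact this (by rw [MvPolynomial.adjoin_range_X]; trivial)
-- chunk 5 : symmetrization
lemma closure_Ds_invariant (σ : Equiv.Perm (Fin n)) {z : DiffAlg K n m}
    (hz : z ∈ Submonoid.closure (Ds K n m)) : act K n m σ z = z := by
  induction hz using Submonoid.closure_induction with
  | mem x hx => exact act_Ds K n m σ hx
  | one => exact map_one _
  | mul x y hx hy ihx ihy => rw [map_mul, ihx, ihy]

lemma closure_Ds_mem_A0 {z : DiffAlg K n m}
    (hz : z ∈ Submonoid.closure (Ds K n m)) : z ∈ A0 K n m := by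
  induction hz using Submonoid.closure_induction with
  | mem x hx => exact Algebra.subset_adjoin hx
  | one => exact one_mem _
  | mul x y hx hy ihx ihy => exact mul_mem ihx ihy

lemma closure_F_phi {y : DiffAlg K n m}
    (hy : y ∈ Submonoid.closure (Set.range (fVar K n m))) :
    ∃ μ : MvPolynomial (Fin n) K, phi K n m μ = y := by
  induction hy using Submonoid.closure_induction with
  | mem x hx => obtain ⟨i, rfl⟩ := hx; exact ⟨MvPolynomial.X i, aeval_X _ _⟩
  | one => exact ⟨1, map_one _⟩
  | mul x y hx hy ihx ihy =>
      obtain ⟨μ, rfl⟩ := ihx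
      obtain ⟨ν, rfl⟩ := ihy
      exact ⟨μ * ν, map_mul _ _ _⟩

lemma phi_esymm_mem_A0 {k : ℕ} (hk1 : 1 ≤ k) (hk2 : k ≤ n) :
    phi K n m (esymm (Fin n) K k) ∈ A0 K n m := by
  have h : phi K n m (esymm (Fin n) K k) = (-1 : DiffAlg K n m) ^ k * sFun K n m k := by
    rw [sFun_eq, ← mul_assoc, ← pow_add, Even.neg_one_pow ⟨k, rfl⟩, one_mul]
  rw [h]
  exact mul_mem (pow_mem (neg_mem (one_mem _)) k) (sFun_mem_A0 K n m hk2)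

lemma symsum_phi_mem_A0 (μ : MvPolynomial (Fin n) K) :
    ∑ σ : Equiv.Perm (Fin n), act K n m σ (phi K n m μ) ∈ A0 K n m := by
  have hsum : ∑ σ : Equiv.Perm (Fin n), act K n m σ (phi K n m μ) =
      phi K n m (∑ σ : Equiv.Perm (Fin n), rename (⇑σ) μ) := by
    rw [map_sum]
    exact Finset.sum_congr rfl fun σ _ => phi_rename K n m σ μ
  rw [hsum]
  have hsym : (∑ σ : Equiv.Perm (Fin n), rename (⇑σ) μ).IsSymmetric := by
    intro τ
    rw [map_sum]
    rw [← Equiv.sum_comp (Equiv.mulLeft τ) (fun σ : Equiv.Perm (Fin n) => rename (⇑σ) μ)]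
    refine Finset.sum_congr rfl fun σ _ => ?_
    rw [rename_rename]
    rfl
  obtain ⟨ψ, hψ⟩ := esymmAlgHom_surjective (σ := Fin n) (R := K) (n := n)
    (le_of_eq (Fintype.card_fin n)) ⟨_, hsym⟩
  have hν2 : (∑ σ : Equiv.Perm (Fin n), rename (⇑σ) μ) =
      aeval (fun i : Fin n => esymm (Fin n) K ((i : ℕ) + 1)) ψ := by
    have h := congrArg Subtype.val hψ
    rw [esymmAlgHom_apply] at h
    exact h.symm
  rw [hν2]
  have hcomp : phi K n m (aeval (fun i : Fin n => esymm (Fin n) K ((i : ℕ) + 1)) ψ) =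
      aeval (fun i : Fin n => phi K n m (esymm (Fin n) K ((i : ℕ) + 1))) ψ := by
    have h := congrFun (congrArg DFunLike.coe
      (comp_aeval (φ := phi K n m) (f := fun i : Fin n => esymm (Fin n) K ((i : ℕ) + 1)))) ψ
    exact h
  rw [hcomp]
  have hmem : aeval (fun i : Fin n => phi K n m (esymm (Fin n) K ((i : ℕ) + 1))) ψ ∈
      Algebra.adjoin K (Set.range (fun i : Fin n => phi K n m (esymm (Fin n) K ((i : ℕ) + 1)))) := by
    rw [Algebra.adjoin_range_eq_range_aeval]
    exact ⟨ψ, rfl⟩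
  refine Algebra.adjoin_le ?_ hmem
  rintro y ⟨i, rfl⟩
  exact phi_esymm_mem_A0 K n m (Nat.succ_le_succ (Nat.zero_le _)) (Nat.succ_le_of_lt i.isLt)

lemma invariant_mem_A0 {q : DiffAlg K n m} (hqA : q ∈ A K n m)
    (hq : ∀ σ : Equiv.Perm (Fin n), act K n m σ q = q) : q ∈ A0 K n m := by
  have hspan : q ∈ Submodule.span K
      ((Submonoid.closure (Set.range (fVar K n m) ∪ Ds K n m) : Submonoid (DiffAlg K n m)) :
        Set (DiffAlg K n m)) := by
    have h := Algebra.adjoin_eq_span (R := K) (s := Set.range (fVar K n m) ∪ Ds K n m)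
    have : q ∈ Subalgebra.toSubmodule (Algebra.adjoin K (Set.range (fVar K n m) ∪ Ds K n m)) := hqA
    rwa [h] at this
  have keyall : ∀ x ∈ Submodule.span K
      ((Submonoid.closure (Set.range (fVar K n m) ∪ Ds K n m) : Submonoid (DiffAlg K n m)) :
        Set (DiffAlg K n m)),
      ∑ σ : Equiv.Perm (Fin n), act K n m σ x ∈ A0 K n m := by
    intro x hx
    induction hx using Submodule.span_induction with
    | mem x hx =>
        rw [SetLike.mem_coe, Submonoid.closure_union, Submonoid.mem_sup] at hx
        obtain ⟨y, hy, z, hz, rfl⟩ := hx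
        have hzinv := fun σ => closure_Ds_invariant K n m σ hz
        have hrw : ∑ σ : Equiv.Perm (Fin n), act K n m σ (y * z) =
            (∑ σ : Equiv.Perm (Fin n), act K n m σ y) * z := by
          rw [Finset.sum_mul]
          exact Finset.sum_congr rfl fun σ _ => by rw [map_mul, hzinv σ]
        rw [hrw]
        obtain ⟨μ, rfl⟩ := closure_F_phi K n m hy
        exact mul_mem (symsum_phi_mem_A0 K n m μ) (closure_Ds_mem_A0 K n m hz)
    | zero => simpa using zero_mem (A0 K n m)
    | add x y hx hy ihx ihy =>
        have : ∑ σ : Equiv.Perm (Fin n), act K n m σ (x + y) =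
            (∑ σ : Equiv.Perm (Fin n), act K n m σ x) +
            ∑ σ : Equiv.Perm (Fin n), act K n m σ y := by
          rw [← Finset.sum_add_distrib]
          exact Finset.sum_congr rfl fun σ _ => map_add _ _ _
        rw [this]
        exact add_mem ihx ihy
    | smul a x hx ih =>
        have : ∑ σ : Equiv.Perm (Fin n), act K n m σ (a • x) =
            a • ∑ σ : Equiv.Perm (Fin n), act K n m σ x := by
          rw [Finset.smul_sum]
          exact Finset.sum_congr rfl fun σ _ => map_smul _ _ _
        rw [this]
        exact Subalgebra.smul_mem _ ih a
  have key := keyall q hspan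
  have h2 : ∑ σ : Equiv.Perm (Fin n), act K n m σ q = ((n.factorial : K)) • q := by
    rw [Finset.sum_congr rfl fun σ _ => hq σ, Finset.sum_const, Finset.card_univ,
      Fintype.card_perm, Fintype.card_fin, Nat.cast_smul_eq_nsmul]
  rw [h2] at key
  have h3 := Subalgebra.smul_mem _ key ((n.factorial : K))⁻¹
  rwa [smul_smul, inv_mul_cancel₀
    (Nat.cast_ne_zero.mpr n.factorial_ne_zero), one_smul] at h3

/-- `SymDf ⊆ K[Ds][1/Δ]`: every `S_n`-invariant polynomial in the `fᵢ` and their partial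
derivatives lies, after multiplying by a power of the discriminant, in the subalgebra
generated by the iterated partial derivatives of the elementary symmetric functions. -/
theorem symDf_subset_localized_Ds (p : DiffAlg K n m)
    (hp : ∀ σ : Equiv.Perm (Fin n),
      MvPolynomial.rename (fun v : Fin n × (Fin m →₀ ℕ) => (σ v.1, v.2)) p = p) :
    ∃ N : ℕ, Delta K n m ^ N * p ∈ Algebra.adjoin K (Ds K n m) := by
  obtain ⟨N, hN⟩ := all_mem_T K n m p
  refine ⟨N, ?_⟩
  have hinv : ∀ σ : Equiv.Perm (Fin n),
      act K n m σ (Delta K n m ^ N * p) = Delta K n m ^ N * p := by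
    intro σ
    rw [map_mul, map_pow, act_Delta]
    congr 1
    exact hp σ
  exact invariant_mem_A0 K n m hN hinv

end
end

section
/- The count of possibly disconnected unramified covers of an elliptic curve of degree l, weighted by inverse order of automorphism group, equals the number of partitions of l; equivalently, the exponential of the connected-cover generating series log P(x) = ∑_{k≥1} σ_{-1}(k) x^k equals the partition generating function: exp(∑_{k≥1} σ_{-1}(k) x^k) = ∏_{n≥1}(1−x^n)^{-1}, as formal power series over ℚ. -/
open PowerSeries Finset

noncomputable section

/-- Formal exponential `exp A = ∑_{n≥0} Aⁿ/n!` of a power series with zero constant term,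
defined coefficientwise by truncation. -/
def pexp (A : PowerSeries ℚ) : PowerSeries ℚ :=
  PowerSeries.mk fun N =>
    PowerSeries.coeff N (∑ n ∈ Finset.range (N + 1), ((n.factorial : ℚ)⁻¹) • A ^ n)

/-- `σ₋₁(k) = ∑_{d ∣ k} 1/d`. -/
def sigmaNegOne (k : ℕ) : ℚ := ∑ d ∈ k.divisors, (d : ℚ)⁻¹

/-! ### Auxiliary definitions -/

/-- Truncated partition product. -/
def Qd (M : ℕ) : PowerSeries ℚ := ∏ k ∈ Finset.Icc 1 M, (1 - X ^ k)⁻¹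

/-- Truncated logarithmic derivative of the partition product. -/
def Sd (M : ℕ) : PowerSeries ℚ :=
  ∑ k ∈ Finset.Icc 1 M, C (k : ℚ) * X ^ (k - 1) * (1 - X ^ k)⁻¹

/-- The series `A = ∑ σ₋₁(k) xᵏ`. -/
def Ad : PowerSeries ℚ := PowerSeries.mk fun k => sigmaNegOne k

/-- Truncated exponential of `Ad`. -/
def Ed (M : ℕ) : PowerSeries ℚ := ∑ n ∈ Finset.range (M + 1), ((n.factorial : ℚ)⁻¹) • Ad ^ n

/-! ### Basic lemmas -/

lemma gk_eq (k : ℕ) (hk : 1 ≤ k) :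
    ((1 - X ^ k : PowerSeries ℚ))⁻¹ = PowerSeries.mk fun n => if k ∣ n then 1 else 0 := by
  rw [PowerSeries.inv_eq_iff_mul_eq_one]
  · ext n
    rw [mul_sub, mul_one, map_sub, PowerSeries.coeff_mul_X_pow', coeff_mk, PowerSeries.coeff_one]
    simp only [coeff_mk]
    rcases Nat.eq_zero_or_pos n with rfl | hn
    · have : ¬ k ≤ 0 := by omega
      simp [this]
    · rw [if_neg hn.ne']
      split_ifs with h1 h2 h3 h2 h3
      · exact sub_self 1
      · exact absurd (Nat.dvd_sub h1 dvd_rfl) h3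
      · exact absurd (Nat.le_of_dvd hn h1) h2
      · exact absurd (Nat.sub_add_cancel h2 ▸ Nat.dvd_add h3 (dvd_refl k)) h1
      · exact sub_self 0
      · exact sub_zero 0
  · have : constantCoeff (1 - X ^ k : PowerSeries ℚ) = 1 := by
      rw [map_sub, map_one, map_pow, constantCoeff_X, zero_pow (by omega : k ≠ 0), sub_zero]
    rw [this]; exact one_ne_zero

lemma dXpow (k : ℕ) : d⁄dX ℚ (X ^ k) = C (k : ℚ) * X ^ (k - 1) := by
  rw [Derivation.leibniz_pow, derivative_X, smul_eq_mul, mul_one, nsmul_eq_mul]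
  simp [mul_comm]

lemma dgk (k : ℕ) (hk : 1 ≤ k) :
    d⁄dX ℚ ((1 - X ^ k : PowerSeries ℚ))⁻¹ =
      C (k : ℚ) * X ^ (k - 1) * ((1 - X ^ k : PowerSeries ℚ))⁻¹ ^ 2 := by
  rw [PowerSeries.derivative_inv', map_sub, dXpow, Derivation.map_one_eq_zero]
  ring

/-! ### Derivative of the truncated product -/

lemma dQ (M : ℕ) : d⁄dX ℚ (Qd M) = Sd M * Qd M := by
  induction M with
  | zero => simp [Qd, Sd]
  | succ M ih =>
      have hS : Sd (M+1) = Sd M + C (M+1 : ℚ) * X ^ (M + 1 - 1) * (1 - X ^ (M+1))⁻¹ := by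
        rw [Sd, Sd, Finset.sum_Icc_succ_top (by omega : 1 ≤ M + 1)]
        push_cast
        ring
      rw [Qd, Finset.prod_Icc_succ_top (by omega), Derivation.leibniz, smul_eq_mul, smul_eq_mul,
        dgk (M+1) (by omega), ← Qd, ih, hS]
      push_cast
      ring

/-! ### Coefficients of `Sd` -/

lemma coeff_term (k i : ℕ) (hk : 1 ≤ k) :
    coeff i (C (k : ℚ) * X ^ (k - 1) * (1 - X ^ k)⁻¹) =
      if k ∣ i + 1 ∧ k ≤ i + 1 then (k : ℚ) else 0 := by
  rw [gk_eq k hk, mul_assoc, coeff_C_mul, coeff_X_pow_mul']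
  by_cases h : k - 1 ≤ i
  · rw [if_pos h, coeff_mk]
    have h2 : i - (k - 1) = i + 1 - k := by omega
    by_cases hd : k ∣ i + 1
    · rw [if_pos, if_pos ⟨hd, by omega⟩]
      · exact mul_one _
      · rw [h2]; exact (Nat.dvd_sub hd dvd_rfl)
    · rw [if_neg, if_neg (by tauto)]
      · exact mul_zero _
      · rw [h2]; intro hc
        exact hd (Nat.sub_add_cancel (show k ≤ i + 1 by omega) ▸ Nat.dvd_add hc (dvd_refl k))
  · rw [if_neg h, if_neg (by omega), mul_zero]

lemma coeff_Sd (M i : ℕ) (hi : i < M) :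
    coeff i (Sd M) = ∑ d ∈ (i+1).divisors, (d : ℚ) := by
  rw [Sd, map_sum]
  rw [← Finset.sum_subset (s₁ := (i+1).divisors)
      (fun d hd => Finset.mem_Icc.mpr
        ⟨Nat.pos_of_mem_divisors hd, le_trans (Nat.divisor_le hd) (by omega)⟩)
      (fun k hk hk2 => by
        rw [coeff_term k i (Finset.mem_Icc.mp hk).1, if_neg]
        intro ⟨h1, h2⟩
        exact hk2 (Nat.mem_divisors.mpr ⟨h1, by omega⟩))]
  refine Finset.sum_congr rfl fun d hd => ?_
  rw [coeff_term d i (Nat.pos_of_mem_divisors hd), if_pos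
    ⟨Nat.dvd_of_mem_divisors hd, Nat.divisor_le hd⟩]

/-! ### Stability of coefficients of `Qd` -/

lemma gk_sub_one (k m : ℕ) (h1 : 1 ≤ k) (h : m ≤ k) :
    (X : PowerSeries ℚ) ^ m ∣ (1 - X ^ k)⁻¹ - 1 := by
  rw [gk_eq k h1, PowerSeries.X_pow_dvd_iff]
  intro j hj
  rw [map_sub, coeff_mk, PowerSeries.coeff_one]
  rcases Nat.eq_zero_or_pos j with rfl | hjp
  · simp
  · rw [if_neg hjp.ne', if_neg, sub_zero]
    intro hd
    exact absurd (Nat.le_of_dvd hjp hd) (by omega)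

lemma prod_sub_one_dvd (m : ℕ) (s : Finset ℕ) (f : ℕ → PowerSeries ℚ)
    (hf : ∀ k ∈ s, (X : PowerSeries ℚ) ^ m ∣ f k - 1) :
    (X : PowerSeries ℚ) ^ m ∣ (∏ k ∈ s, f k) - 1 := by
  classical
  induction s using Finset.induction_on with
  | empty => simp
  | @insert a s' hne ih =>
      rw [Finset.prod_insert hne]
      have h1 : (X : PowerSeries ℚ) ^ m ∣ f a - 1 := hf a (Finset.mem_insert_self a s')
      have h2 := ih fun k hk => hf k (Finset.mem_insert_of_mem hk)
      have : f a * ∏ k ∈ s', f k - 1 = (f a - 1) * ∏ k ∈ s', f k + ((∏ k ∈ s', f k) - 1) := by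
        ring
      rw [this]
      exact dvd_add (Dvd.dvd.mul_right h1 _) h2

lemma coeff_Qd_stable (j M : ℕ) (h : j ≤ M) : coeff j (Qd M) = coeff j (Qd j) := by
  have hQ : Qd M = Qd j * ∏ k ∈ Finset.Ioc j M, (1 - X ^ k)⁻¹ := by
    rw [Qd, Qd, show Finset.Icc 1 M = Finset.Ioc 0 M from Finset.Icc_add_one_left_eq_Ioc 0 M,
      show Finset.Icc 1 j = Finset.Ioc 0 j from Finset.Icc_add_one_left_eq_Ioc 0 j,
      ← Finset.prod_Ioc_consecutive _ (Nat.zero_le j) h]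
  have hdvd : (X : PowerSeries ℚ) ^ (j + 1) ∣ (∏ k ∈ Finset.Ioc j M, (1 - X ^ k)⁻¹) - 1 :=
    prod_sub_one_dvd _ _ _ fun k hk => by
      have := Finset.mem_Ioc.mp hk
      exact gk_sub_one k (j + 1) (by omega) (by omega)
  obtain ⟨c, hc⟩ := hdvd
  have : Qd M = Qd j + Qd j * (X ^ (j + 1) * c) := by
    rw [hQ, ← hc]; ring
  have hz : coeff j (Qd j * (X ^ (j + 1) * c)) = 0 := by
    have hd : (X : PowerSeries ℚ) ^ (j + 1) ∣ Qd j * (X ^ (j + 1) * c) :=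
      ⟨Qd j * c, by ring⟩
    exact PowerSeries.X_pow_dvd_iff.mp hd j (by omega)
  rw [this, map_add, hz, add_zero]

/-! ### Exponential side -/

lemma X_dvd_Ad : (X : PowerSeries ℚ) ∣ Ad := by
  rw [PowerSeries.X_dvd_iff, ← coeff_zero_eq_constantCoeff_apply, Ad, coeff_mk]
  simp [sigmaNegOne]

lemma coeff_pexp_stable (j M : ℕ) (h : j ≤ M) : coeff j (pexp Ad) = coeff j (Ed M) := by
  rw [pexp, coeff_mk, ← Ed]
  have hEd : Ed M = Ed j + ∑ n ∈ Finset.Ico (j + 1) (M + 1), ((n.factorial : ℚ)⁻¹) • Ad ^ n := by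
    rw [Ed, Ed, Finset.range_eq_Ico, Finset.range_eq_Ico,
      ← Finset.sum_Ico_consecutive _ (by omega : 0 ≤ j + 1) (by omega : j + 1 ≤ M + 1)]
  rw [hEd, map_add, map_sum, Finset.sum_eq_zero, add_zero]
  intro n hn
  have hn' := Finset.mem_Ico.mp hn
  rw [map_smul]
  have : coeff j (Ad ^ n) = 0 :=
    PowerSeries.X_pow_dvd_iff.mp (pow_dvd_pow_of_dvd X_dvd_Ad n) j (by omega)
  rw [this, smul_zero]

lemma dE (N : ℕ) : d⁄dX ℚ (Ed (N + 1)) = (d⁄dX ℚ Ad) * Ed N := by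
  rw [Ed, map_sum, Finset.sum_range_succ', Ed, Finset.mul_sum]
  have h0 : d⁄dX ℚ ((Nat.factorial 0 : ℚ)⁻¹ • Ad ^ 0) = 0 := by simp
  rw [h0, add_zero]
  refine Finset.sum_congr rfl fun i _ => ?_
  rw [Derivation.map_smul, Derivation.leibniz_pow, Nat.add_sub_cancel, smul_eq_mul,
    nsmul_eq_mul, PowerSeries.smul_eq_C_mul, PowerSeries.smul_eq_C_mul,
    show ((i + 1 : ℕ) : PowerSeries ℚ) = C ((i + 1 : ℕ) : ℚ) from (map_natCast (C (R := ℚ)) (i+1)).symm,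
    ← mul_assoc, ← map_mul]
  have key : ((i + 1).factorial : ℚ)⁻¹ * ((i + 1 : ℕ) : ℚ) = (i.factorial : ℚ)⁻¹ := by
    rw [Nat.factorial_succ]
    push_cast
    rw [mul_inv]
    have : ((i + 1 : ℚ)) ≠ 0 := by positivity
    field_simp
  rw [key]
  ring

/-! ### The divisor-sum identity -/

lemma sigma_id (n : ℕ) : (n : ℚ) * sigmaNegOne n = ∑ d ∈ n.divisors, (d : ℚ) := by
  rw [sigmaNegOne, Finset.mul_sum]
  rw [← Nat.sum_div_divisors n (fun d => (d : ℚ))]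
  refine Finset.sum_congr rfl fun d hd => ?_
  have h1 : d ∣ n := Nat.dvd_of_mem_divisors hd
  have h2 : (d : ℚ) ≠ 0 := Nat.cast_ne_zero.mpr (Nat.pos_of_mem_divisors hd).ne'
  rw [Nat.cast_div h1 h2, div_eq_mul_inv]

lemma coeff_dAd (i : ℕ) : coeff i (d⁄dX ℚ Ad) = ∑ d ∈ (i+1).divisors, (d : ℚ) := by
  rw [PowerSeries.coeff_derivative, Ad, coeff_mk, ← sigma_id]
  push_cast
  ring

/-! ### The two recursions -/

lemma recursion_exp (N : ℕ) :
    coeff (N + 1) (pexp Ad) * ((N : ℚ) + 1) =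
      ∑ p ∈ Finset.HasAntidiagonal.antidiagonal N, coeff p.1 (d⁄dX ℚ Ad) * coeff p.2 (pexp Ad) := by
  have h1 : coeff N (d⁄dX ℚ (Ed (N + 1))) = coeff (N + 1) (Ed (N + 1)) * ((N : ℚ) + 1) := by
    rw [PowerSeries.coeff_derivative]
  rw [coeff_pexp_stable (N + 1) (N + 1) le_rfl, ← h1, dE, PowerSeries.coeff_mul]
  refine Finset.sum_congr rfl fun p hp => ?_
  have hp' := Finset.HasAntidiagonal.mem_antidiagonal.mp hp
  rw [coeff_pexp_stable p.2 N (by omega)]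

lemma recursion_prod (P : PowerSeries ℚ) (hP : IsPartitionProd P) (N : ℕ) :
    coeff (N + 1) P * ((N : ℚ) + 1) =
      ∑ p ∈ Finset.HasAntidiagonal.antidiagonal N, coeff p.1 (d⁄dX ℚ Ad) * coeff p.2 P := by
  have hPQ : ∀ j : ℕ, coeff j P = coeff j (Qd j) := fun j => hP j
  have h1 : coeff N (d⁄dX ℚ (Qd (N + 1))) = coeff (N + 1) (Qd (N + 1)) * ((N : ℚ) + 1) := by
    rw [PowerSeries.coeff_derivative]
  rw [hPQ (N + 1), ← h1, dQ, PowerSeries.coeff_mul]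
  refine Finset.sum_congr rfl fun p hp => ?_
  have hp' := Finset.HasAntidiagonal.mem_antidiagonal.mp hp
  rw [coeff_Sd (N + 1) p.1 (by omega), coeff_Qd_stable p.2 (N + 1) (by omega),
    ← hPQ p.2, coeff_dAd]

/-- `exp(∑_{k≥1} σ₋₁(k) x^k) = ∏_{n≥1} (1-x^n)⁻¹`. -/
theorem exp_sigmaNegOne_eq_partition_product (P : PowerSeries ℚ) (hP : IsPartitionProd P) :
    pexp (PowerSeries.mk fun k => sigmaNegOne k) = P := by
  show pexp Ad = P
  have key : ∀ N : ℕ, coeff N (pexp Ad) = coeff N P := by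
    intro N
    induction N using Nat.strong_induction_on with
    | _ N ih =>
      match N with
      | 0 =>
          have hL : coeff 0 (pexp Ad) = 1 := by
            rw [coeff_pexp_stable 0 0 le_rfl, Ed]
            simp
          have hR : coeff 0 P = 1 := by
            rw [hP 0]
            simp
          rw [hL, hR]
      | N + 1 =>
          have h1 := recursion_exp N
          have h2 := recursion_prod P hP N
          have hsum : ∑ p ∈ Finset.HasAntidiagonal.antidiagonal N, coeff p.1 (d⁄dX ℚ Ad) * coeff p.2 (pexp Ad)
              = ∑ p ∈ Finset.HasAntidiagonal.antidiagonal N, coeff p.1 (d⁄dX ℚ Ad) * coeff p.2 P := by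
            refine Finset.sum_congr rfl fun p hp => ?_
            have hp' := Finset.HasAntidiagonal.mem_antidiagonal.mp hp
            rw [ih p.2 (by omega)]
          have hNe : ((N : ℚ) + 1) ≠ 0 := by positivity
          have := h1.trans (hsum.trans h2.symm)
          exact mul_right_cancel₀ hNe this
  ext N
  exact key N

end
end
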